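/- arXiv:math/0612513 — 3 statements merged into one kernel-verified Lean document; each statement's English description precedes it below -/
import Mathlib

section
/- Let S = (P, L) be a generalized quadrangle of order (2,t) and let (R, ψ) be a faithful representation of S with (t, |R|) ≠ (2, 2^5). Then every element of R other than the identity and the elements of R_ψ can be written as r_y r_z for some pair of non-collinear points y, z ∈ P. -/
open scoped Classical

/-- A slim partial linear space: a nonempty point set, a nonempty collection of
lines each of which is a 3-element set of points, such that any two distinct
points lie in at most one common line. -/
structure SlimPLS (P : Type*) where
  lines : Set (Finset P)
  nonempty_pts : Nonempty P
  nonempty_lines : lines.Nonempty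
  three_points : ∀ l ∈ lines, l.card = 3
  unique_line : ∀ l₁ ∈ lines, ∀ l₂ ∈ lines, ∀ x y : P,
    x ≠ y → x ∈ l₁ → y ∈ l₁ → x ∈ l₂ → y ∈ l₂ → l₁ = l₂

namespace SlimPLS

variable {P : Type*}

/-- Two points are collinear if they are distinct and lie on a common line. -/
def Collinear (S : SlimPLS P) (x y : P) : Prop :=
  x ≠ y ∧ ∃ l ∈ S.lines, x ∈ l ∧ y ∈ l

/-- The collinearity graph of a slim partial linear space. -/
def graph (S : SlimPLS P) : SimpleGraph P where
  Adj x y := S.Collinear x y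
  symm := ⟨fun x y h => ⟨Ne.symm h.1, h.2.elim fun l hl => ⟨l, hl.1, hl.2.2, hl.2.1⟩⟩⟩
  loopless := ⟨fun x h => h.1 rfl⟩

/-- `S` is a generalized quadrangle of order `(2, t)`: it is connected, no point
is collinear with all other points, every point is on exactly `t+1` lines, and
for every point `x` and line `l` with `x ∉ l` there is exactly one point of `l`
collinear with `x`. -/
def IsGQ (S : SlimPLS P) (t : ℕ) : Prop :=
  S.graph.Connected ∧
  (∀ x : P, ∃ y : P, y ≠ x ∧ ¬ S.Collinear x y) ∧
  (∀ x : P, {l | l ∈ S.lines ∧ x ∈ l}.ncard = t + 1) ∧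
  (∀ x : P, ∀ l ∈ S.lines, x ∉ l → ∃! y : P, y ∈ l ∧ S.Collinear x y)

/-- A set of points is an arc if its points are pairwise non-collinear. -/
def IsArc (S : SlimPLS P) (T : Set P) : Prop :=
  ∀ x ∈ T, ∀ y ∈ T, x ≠ y → ¬ S.Collinear x y

/-- `{a,b,c}` is a complete 3-arc: three pairwise distinct, pairwise
non-collinear points not contained in a 4-arc. -/
def Complete3Arc (S : SlimPLS P) (a b c : P) : Prop :=
  a ≠ b ∧ a ≠ c ∧ b ≠ c ∧ S.IsArc {a, b, c} ∧
  ∀ d : P, d ∉ ({a, b, c} : Set P) → ¬ S.IsArc (insert d {a, b, c})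

/-- `{a,b,c}` is a complete 3-arc of the subset `Q`: three pairwise distinct,
pairwise non-collinear points of `Q` not contained in a 4-arc inside `Q`. -/
def Complete3ArcIn (S : SlimPLS P) (Q : Set P) (a b c : P) : Prop :=
  a ∈ Q ∧ b ∈ Q ∧ c ∈ Q ∧ a ≠ b ∧ a ≠ c ∧ b ≠ c ∧ S.IsArc {a, b, c} ∧
  ∀ d ∈ Q, d ∉ ({a, b, c} : Set P) → ¬ S.IsArc (insert d {a, b, c})

/-- `Q` is a sub-generalized-quadrangle of order `(2,t)` of `S`: together with
the lines of `S` contained in it, `Q` is a `(2,t)`-GQ; in particular any line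
meeting `Q` in at least two points is contained in `Q`. -/
def IsSubGQ (S : SlimPLS P) (Q : Set P) (t : ℕ) : Prop :=
  Q.Nonempty ∧
  (∃ l ∈ S.lines, (l : Set P) ⊆ Q) ∧
  (∀ l ∈ S.lines, ∀ x ∈ l, ∀ y ∈ l, x ≠ y → x ∈ Q → y ∈ Q → (l : Set P) ⊆ Q) ∧
  (SimpleGraph.induce Q S.graph).Connected ∧
  (∀ x ∈ Q, ∃ y ∈ Q, y ≠ x ∧ ¬ S.Collinear x y) ∧
  (∀ x ∈ Q, {l | l ∈ S.lines ∧ x ∈ l ∧ (l : Set P) ⊆ Q}.ncard = t + 1) ∧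
  (∀ x ∈ Q, ∀ l ∈ S.lines, (l : Set P) ⊆ Q → x ∉ l → ∃! y : P, y ∈ l ∧ S.Collinear x y)

/-- `S` is a near hexagon: connected of diameter 3, no point collinear with all
other points, and for every point `x` and line `l` there is a unique point of
`l` nearest to `x`. -/
def IsNearHexagon (S : SlimPLS P) : Prop :=
  S.graph.Connected ∧
  (∀ x y : P, S.graph.dist x y ≤ 3) ∧
  (∃ x y : P, S.graph.dist x y = 3) ∧
  (∀ x : P, ∃ y : P, y ≠ x ∧ ¬ S.Collinear x y) ∧
  (∀ x : P, ∀ l ∈ S.lines, ∃! y : P, y ∈ l ∧ ∀ z ∈ l, S.graph.dist x y ≤ S.graph.dist x z)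

/-- `S` is dense: any two points at distance 2 have at least two common
neighbours. -/
def IsDense (S : SlimPLS P) : Prop :=
  ∀ x y : P, S.graph.dist x y = 2 →
    ∃ u v : P, u ≠ v ∧ S.Collinear x u ∧ S.Collinear u y ∧ S.Collinear x v ∧ S.Collinear v y

/-- `Q` is a quad: a convex subset of diameter 2 in which no point is collinear
with all other points of `Q`. -/
def IsQuad (S : SlimPLS P) (Q : Set P) : Prop :=
  (∀ u ∈ Q, ∀ v ∈ Q, ∀ w : P,
      S.graph.dist u w + S.graph.dist w v = S.graph.dist u v → w ∈ Q) ∧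
  (∀ u ∈ Q, ∀ v ∈ Q, S.graph.dist u v ≤ 2) ∧
  (∃ u ∈ Q, ∃ v ∈ Q, S.graph.dist u v = 2) ∧
  (∀ u ∈ Q, ∃ v ∈ Q, v ≠ u ∧ ¬ S.Collinear u v)

/-- A quad `Q` is of type `(2, t₂)` if every point of `Q` lies on exactly
`t₂ + 1` lines contained in `Q`. -/
def QuadType (S : SlimPLS P) (Q : Set P) (t₂ : ℕ) : Prop :=
  ∀ x ∈ Q, {l | l ∈ S.lines ∧ x ∈ l ∧ (l : Set P) ⊆ Q}.ncard = t₂ + 1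

/-- The point-quad pair `(x, Q)` is classical: there is a unique point `y ∈ Q`
nearest to `x`, with `d(x,z) = d(x,y) + d(y,z)` for all `z ∈ Q`. -/
def IsClassicalPair (S : SlimPLS P) (x : P) (Q : Set P) : Prop :=
  ∃! y : P, y ∈ Q ∧ ∀ z ∈ Q, S.graph.dist x z = S.graph.dist x y + S.graph.dist y z

/-- A quad is classical (big) if every point-quad pair with it is classical. -/
def IsClassicalQuad (S : SlimPLS P) (Q : Set P) : Prop :=
  ∀ x : P, S.IsClassicalPair x Q

/-- A subspace: any line containing two of its points is contained in it. -/
def IsSubspace (S : SlimPLS P) (X : Set P) : Prop :=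
  ∀ l ∈ S.lines, ∀ x ∈ l, ∀ y ∈ l, x ≠ y → x ∈ X → y ∈ X → (l : Set P) ⊆ X

/-- The subspace generated by a set of points. -/
def subspaceGen (S : SlimPLS P) (A : Set P) : Set P :=
  ⋂₀ {X | S.IsSubspace X ∧ A ⊆ X}

/-- `NPdim S` is the rank over `F₂` of the distance-3 adjacency matrix. -/
noncomputable def NPdim [Fintype P] (S : SlimPLS P) : ℕ :=
  Matrix.rank (Matrix.of fun x y : P => if S.graph.dist x y = 3 then (1 : ZMod 2) else 0)

/-- `dimV S` is the dimension of the universal representation module of `S`: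
the free `F₂`-vector space on the points modulo the span of the elements
`v_x + v_y + v_z` for the lines `{x,y,z}`. -/
noncomputable def dimV (S : SlimPLS P) : ℕ :=
  Module.finrank (ZMod 2)
    ((P →₀ ZMod 2) ⧸ Submodule.span (ZMod 2)
      {f : P →₀ ZMod 2 | ∃ l ∈ S.lines, f = ∑ x ∈ l, Finsupp.single x 1})

end SlimPLS

/-- A representation of a slim partial linear space `S`: an assignment of an
order-2 element `r x` of `R` to each point `x`, such that the images generate
`R` and for every line `{x,y,z}` the set `{1, r x, r y, r z}` is a Klein four
subgroup (`r x * r y = r z` for the three pairwise distinct points of a line). -/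
structure SlimPLS.Rep {P : Type*} (S : SlimPLS P) (R : Type*) [Group R] where
  r : P → R
  order_two : ∀ x : P, orderOf (r x) = 2
  gen : Subgroup.closure (Set.range r) = ⊤
  line_rel : ∀ l ∈ S.lines, ∀ x ∈ l, ∀ y ∈ l, ∀ z ∈ l,
    x ≠ y → x ≠ z → y ≠ z → r x * r y = r z

/-- A finite 2-group is extraspecial if its Frattini subgroup, commutator
subgroup and center coincide and have order 2. -/
def IsExtraspecial (G : Type*) [Group G] : Prop :=
  Finite G ∧ IsPGroup 2 G ∧ frattini G = commutator G ∧
    commutator G = Subgroup.center G ∧ Nat.card (Subgroup.center G) = 2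

namespace SlimPLS

variable {P : Type*} {S : SlimPLS P}

lemma col_symm {x y : P} (h : S.Collinear x y) : S.Collinear y x :=
  ⟨Ne.symm h.1, h.2.elim fun l hl => ⟨l, hl.1, hl.2.2, hl.2.1⟩⟩

lemma col_ne {x y : P} (h : S.Collinear x y) : x ≠ y := h.1

lemma line_col {l : Finset P} (hl : l ∈ S.lines) {x y : P} (hx : x ∈ l) (hy : y ∈ l)
    (hxy : x ≠ y) : S.Collinear x y := ⟨hxy, l, hl, hx, hy⟩

lemma not_mem_line_of_not_col {l : Finset P} (hl : l ∈ S.lines) {x y : P} (hy : y ∈ l)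
    (hxy : x ≠ y) (hnc : ¬ S.Collinear x y) : x ∉ l := fun hx => hnc (line_col hl hx hy hxy)

/-- the chosen line through two collinear points -/
noncomputable def lin (S : SlimPLS P) (x y : P) : Finset P := by
  classical exact if h : S.Collinear x y then h.2.choose else ∅

lemma lin_spec {x y : P} (h : S.Collinear x y) :
    S.lin x y ∈ S.lines ∧ x ∈ S.lin x y ∧ y ∈ S.lin x y := by
  rw [lin, dif_pos h]
  exact ⟨h.2.choose_spec.1, h.2.choose_spec.2.1, h.2.choose_spec.2.2⟩

lemma lin_mem {x y : P} (h : S.Collinear x y) : S.lin x y ∈ S.lines := (lin_spec h).1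
lemma mem_lin_left {x y : P} (h : S.Collinear x y) : x ∈ S.lin x y := (lin_spec h).2.1
lemma mem_lin_right {x y : P} (h : S.Collinear x y) : y ∈ S.lin x y := (lin_spec h).2.2

lemma lin_unique {x y : P} (h : S.Collinear x y) {l : Finset P} (hl : l ∈ S.lines)
    (hx : x ∈ l) (hy : y ∈ l) : l = S.lin x y :=
  S.unique_line l hl _ (lin_mem h) x y h.1 hx hy (mem_lin_left h) (mem_lin_right h)

lemma exists_trd {l : Finset P} (hl : l ∈ S.lines) {x y : P} (hx : x ∈ l) (hy : y ∈ l)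
    (hxy : x ≠ y) : ∃ z ∈ l, z ≠ x ∧ z ≠ y ∧ ∀ w ∈ l, w = x ∨ w = y ∨ w = z := by
  classical
  have h3 := S.three_points l hl
  have h1 : ((l.erase x).erase y).card = 1 := by
    rw [Finset.card_erase_of_mem (Finset.mem_erase.2 ⟨Ne.symm hxy, hy⟩),
      Finset.card_erase_of_mem hx, h3]
  obtain ⟨z, hz⟩ := Finset.card_eq_one.1 h1
  have hzm : z ∈ (l.erase x).erase y := by rw [hz]; exact Finset.mem_singleton_self z
  have hzl : z ∈ l := Finset.mem_of_mem_erase (Finset.mem_of_mem_erase hzm)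
  refine ⟨z, hzl, (Finset.mem_erase.1 (Finset.mem_of_mem_erase hzm)).1,
    (Finset.mem_erase.1 hzm).1, fun w hw => ?_⟩
  by_cases hwx : w = x
  · exact Or.inl hwx
  by_cases hwy : w = y
  · exact Or.inr (Or.inl hwy)
  · refine Or.inr (Or.inr ?_)
    have : w ∈ (l.erase x).erase y := Finset.mem_erase.2 ⟨hwy, Finset.mem_erase.2 ⟨hwx, hw⟩⟩
    rw [hz] at this; exact Finset.mem_singleton.1 this

/-- the third point on the line through two collinear points -/
noncomputable def trd (S : SlimPLS P) (x y : P) : P := by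
  classical exact if h : S.Collinear x y then
    (exists_trd (lin_mem h) (mem_lin_left h) (mem_lin_right h) h.1).choose
  else x

lemma trd_spec {x y : P} (h : S.Collinear x y) :
    S.trd x y ∈ S.lin x y ∧ S.trd x y ≠ x ∧ S.trd x y ≠ y ∧
      ∀ w ∈ S.lin x y, w = x ∨ w = y ∨ w = S.trd x y := by
  have hex := exists_trd (lin_mem h) (mem_lin_left h) (mem_lin_right h) h.1
  rw [trd, dif_pos h]
  exact ⟨hex.choose_spec.1, hex.choose_spec.2.1, hex.choose_spec.2.2.1, hex.choose_spec.2.2.2⟩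

lemma trd_mem_lin {x y : P} (h : S.Collinear x y) : S.trd x y ∈ S.lin x y := (trd_spec h).1
lemma trd_ne_left {x y : P} (h : S.Collinear x y) : S.trd x y ≠ x := (trd_spec h).2.1
lemma trd_ne_right {x y : P} (h : S.Collinear x y) : S.trd x y ≠ y := (trd_spec h).2.2.1

lemma mem_lin_cases {x y : P} (h : S.Collinear x y) {w : P} (hw : w ∈ S.lin x y) :
    w = x ∨ w = y ∨ w = S.trd x y := (trd_spec h).2.2.2 w hw

lemma col_trd_left {x y : P} (h : S.Collinear x y) : S.Collinear x (S.trd x y) :=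
  line_col (lin_mem h) (mem_lin_left h) (trd_mem_lin h) (Ne.symm (trd_ne_left h))

lemma col_trd_right {x y : P} (h : S.Collinear x y) : S.Collinear y (S.trd x y) :=
  line_col (lin_mem h) (mem_lin_right h) (trd_mem_lin h) (Ne.symm (trd_ne_right h))

/-- any line containing two collinear points is THE line -/
lemma eq_lin {x y : P} (h : S.Collinear x y) {l : Finset P} (hl : l ∈ S.lines)
    (hx : x ∈ l) (hy : y ∈ l) : l = S.lin x y := lin_unique h hl hx hy

lemma lin_comm {x y : P} (h : S.Collinear x y) : S.lin y x = S.lin x y :=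
  eq_lin h (lin_mem (col_symm h)) (mem_lin_right (col_symm h)) (mem_lin_left (col_symm h))

lemma trd_comm {x y : P} (h : S.Collinear x y) : S.trd y x = S.trd x y := by
  have h' := col_symm h
  have hm : S.trd y x ∈ S.lin x y := by rw [← lin_comm h]; exact trd_mem_lin h'
  rcases mem_lin_cases h hm with h1 | h1 | h1
  · exact absurd h1 (trd_ne_right h')
  · exact absurd h1 (trd_ne_left h')
  · exact h1

lemma lin_trd_left {x y : P} (h : S.Collinear x y) :
    S.lin x (S.trd x y) = S.lin x y :=
  (eq_lin (col_trd_left h) (lin_mem h) (mem_lin_left h) (trd_mem_lin h)).symm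

lemma trd_trd {x y : P} (h : S.Collinear x y) : S.trd x (S.trd x y) = y := by
  have h2 := col_trd_left h
  have hm : S.trd x (S.trd x y) ∈ S.lin x y := by
    rw [← lin_trd_left h]; exact trd_mem_lin h2
  rcases mem_lin_cases h hm with h1 | h1 | h1
  · exact absurd h1 (trd_ne_left h2)
  · exact h1
  · exact absurd (h1.symm) (Ne.symm (trd_ne_right h2))
  -- note: trd x (trd x y) = trd x y contradicts trd_ne_right of h2

end SlimPLS

namespace SlimPLS

variable {P : Type*} {S : SlimPLS P} {t : ℕ}

/-- set of lines through a point -/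
def thru (S : SlimPLS P) (x : P) : Set (Finset P) := {l | l ∈ S.lines ∧ x ∈ l}

/-- common neighbours of two points -/
def perp (S : SlimPLS P) (y z : P) : Set P := {u | S.Collinear y u ∧ S.Collinear z u}

/-- hard (saturated) triples -/
def Hard (S : SlimPLS P) (x y z : P) : Prop :=
  (¬ S.Collinear x y ∧ x ≠ y) ∧ (¬ S.Collinear x z ∧ x ≠ z) ∧ (¬ S.Collinear y z ∧ y ≠ z) ∧
  ∀ u, S.Collinear y u → S.Collinear z u → S.Collinear x u

lemma thru_ncard (hGQ : S.IsGQ t) (x : P) : (S.thru x).ncard = t + 1 := hGQ.2.2.1 x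

lemma thru_finite (hGQ : S.IsGQ t) (x : P) : (S.thru x).Finite := by
  by_contra h
  have := Set.Infinite.ncard (s := S.thru x) h
  rw [thru_ncard hGQ] at this
  omega

lemma ax4 (hGQ : S.IsGQ t) {x : P} {l : Finset P} (hl : l ∈ S.lines) (hx : x ∉ l) :
    ∃! y : P, y ∈ l ∧ S.Collinear x y := hGQ.2.2.2 x l hl hx

lemma no_triangle (hGQ : S.IsGQ t) {a b c : P} (hab : S.Collinear a b)
    (hca : S.Collinear c a) (hcb : S.Collinear c b) : c = S.trd a b := by
  by_cases hc : c ∈ S.lin a b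
  · rcases mem_lin_cases hab hc with h | h | h
    · exact absurd h.symm (col_ne hca).symm
    · exact absurd h.symm (col_ne hcb).symm
    · exact h
  · obtain ⟨w, _, hwu⟩ := ax4 hGQ (lin_mem hab) hc
    have ha := hwu a ⟨mem_lin_left hab, hca⟩
    have hb := hwu b ⟨mem_lin_right hab, hcb⟩
    exact absurd (ha ▸ hb) (col_ne hab).symm

lemma noncol_of_two_lines (hGQ : S.IsGQ t) {u a b : P} (hua : S.Collinear u a)
    (hub : S.Collinear u b) (hbl : b ∉ S.lin u a) : ¬ S.Collinear a b ∧ a ≠ b := by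
  constructor
  · intro hab
    have hu : u = S.trd a b := no_triangle hGQ hab hua hub
    have : S.lin a b = S.lin u a := by
      refine eq_lin hua (lin_mem hab) ?_ (mem_lin_left hab)
      rw [hu]; exact trd_mem_lin hab
    exact hbl (this ▸ mem_lin_right hab)
  · rintro rfl; exact hbl (mem_lin_right hua)

lemma common_neighbor (hGQ : S.IsGQ t) {x y : P} (hne : x ≠ y) (hnc : ¬ S.Collinear x y) :
    ∃ u, S.Collinear x u ∧ S.Collinear y u := by
  have hn : (S.thru y).Nonempty := by
    apply Set.nonempty_of_ncard_ne_zero; rw [thru_ncard hGQ]; omega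
  obtain ⟨l, hl, hyl⟩ := hn
  have hx : x ∉ l := not_mem_line_of_not_col hl hyl hne hnc
  obtain ⟨u, ⟨hul, hxu⟩, _⟩ := ax4 hGQ hl hx
  have huy : u ≠ y := by rintro rfl; exact hnc hxu
  exact ⟨u, hxu, line_col hl hyl hul (Ne.symm huy)⟩

lemma perp_ncard (hGQ : S.IsGQ t) {y z : P} (hne : y ≠ z) (hnc : ¬ S.Collinear y z) :
    (S.perp y z).ncard = t + 1 := by
  have hinj : Set.InjOn (fun u => S.lin y u) (S.perp y z) := by
    intro u hu v hv he
    simp only at he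
    have hvl : v ∈ S.lin y u := he ▸ mem_lin_right hv.1
    have hzl : z ∉ S.lin y u := by
      intro hz
      exact hnc (line_col (lin_mem hu.1) (mem_lin_left hu.1) hz hne)
    obtain ⟨w, _, hwu⟩ := ax4 hGQ (lin_mem hu.1) hzl
    have h1 := hwu u ⟨mem_lin_right hu.1, hu.2⟩
    have h2 := hwu v ⟨hvl, hv.2⟩
    exact h1.trans h2.symm
  have himg : (fun u => S.lin y u) '' (S.perp y z) = S.thru y := by
    apply Set.Subset.antisymm
    · rintro _ ⟨u, hu, rfl⟩
      exact ⟨lin_mem hu.1, mem_lin_left hu.1⟩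
    · rintro l ⟨hl, hyl⟩
      have hz : z ∉ l := not_mem_line_of_not_col hl hyl (Ne.symm hne) fun h => hnc (col_symm h)
      obtain ⟨u, ⟨hul, hzu⟩, _⟩ := ax4 hGQ hl hz
      have huy : u ≠ y := by rintro rfl; exact hnc (col_symm hzu)
      have hyu : S.Collinear y u := line_col hl hyl hul (Ne.symm huy)
      exact ⟨u, ⟨hyu, hzu⟩, (eq_lin hyu hl hyl hul).symm⟩
  have := Set.ncard_image_of_injOn hinj
  rw [himg, thru_ncard hGQ] at this
  omega

lemma perp_finite (hGQ : S.IsGQ t) {y z : P} (hne : y ≠ z) (hnc : ¬ S.Collinear y z) :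
    (S.perp y z).Finite := by
  by_contra h
  have := Set.Infinite.ncard (s := S.perp y z) h
  rw [perp_ncard hGQ hne hnc] at this; omega

lemma perp_nonempty (hGQ : S.IsGQ t) {y z : P} (hne : y ≠ z) (hnc : ¬ S.Collinear y z) :
    (S.perp y z).Nonempty := by
  apply Set.nonempty_of_ncard_ne_zero; rw [perp_ncard hGQ hne hnc]; omega

lemma t_pos (hGQ : S.IsGQ t) : 1 ≤ t := by
  obtain ⟨l0, hl0⟩ := S.nonempty_lines
  have hcard := S.three_points l0 hl0
  have hne : l0.Nonempty := Finset.card_pos.1 (by omega)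
  obtain ⟨x, hx⟩ := hne
  obtain ⟨w, hwx, hnc⟩ := hGQ.2.1 x
  have hwl : w ∉ l0 := not_mem_line_of_not_col hl0 hx hwx fun h => hnc (col_symm h)
  -- note : hnc : ¬ col x w ; w ∉ l0 needs x-w relation: w ∈ l0 would give col w x
  obtain ⟨u, ⟨hul, hwu⟩, _⟩ := ax4 hGQ hl0 hwl
  have hm : S.lin w u ∈ S.thru u := ⟨lin_mem hwu, mem_lin_right hwu⟩
  have hl0t : l0 ∈ S.thru u := ⟨hl0, hul⟩
  have hd : S.lin w u ≠ l0 := by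
    intro h; exact hwl (h ▸ mem_lin_left hwu)
  have hsub : ({S.lin w u, l0} : Set (Finset P)) ⊆ S.thru u := by
    rintro m (rfl | rfl)
    exacts [hm, hl0t]
  have h2 : ({S.lin w u, l0} : Set (Finset P)).ncard = 2 := Set.ncard_pair hd
  have := Set.ncard_le_ncard hsub (thru_finite hGQ u)
  rw [h2, thru_ncard hGQ] at this
  omega

lemma perp_two (hGQ : S.IsGQ t) {y z : P} (hne : y ≠ z) (hnc : ¬ S.Collinear y z) :
    ∃ u ∈ S.perp y z, ∃ v ∈ S.perp y z, u ≠ v := by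
  have h1 : 1 < (S.perp y z).ncard := by
    rw [perp_ncard hGQ hne hnc]; have := t_pos hGQ; omega
  exact (Set.one_lt_ncard (perp_finite hGQ hne hnc)).mp h1

lemma perp_arc (hGQ : S.IsGQ t) {y z : P} (hne : y ≠ z) {u v : P}
    (hu : u ∈ S.perp y z) (hv : v ∈ S.perp y z) (huv : u ≠ v) : ¬ S.Collinear u v := by
  intro hcol
  have h1 : y = S.trd u v := no_triangle hGQ hcol hu.1 hv.1
  have h2 : z = S.trd u v := no_triangle hGQ hcol hu.2 hv.2
  exact hne (h1.trans h2.symm)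

end SlimPLS

namespace SlimPLS

variable {P : Type*} {S : SlimPLS P} {t : ℕ} {R : Type*} [Group R] {ρ : S.Rep R}

lemma rr_sq (ρ : S.Rep R) (x : P) : ρ.r x * ρ.r x = 1 := by
  have h := pow_orderOf_eq_one (ρ.r x)
  rw [ρ.order_two x, pow_two] at h
  exact h

lemma rr_ne_one (ρ : S.Rep R) (x : P) : ρ.r x ≠ 1 := by
  intro h
  have := ρ.order_two x
  rw [h, orderOf_one] at this
  omega

lemma rr_inv (ρ : S.Rep R) (x : P) : (ρ.r x)⁻¹ = ρ.r x :=
  inv_eq_of_mul_eq_one_right (rr_sq ρ x)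

lemma rep_line (ρ : S.Rep R) {x y : P} (h : S.Collinear x y) :
    ρ.r x * ρ.r y = ρ.r (S.trd x y) :=
  ρ.line_rel _ (lin_mem h) x (mem_lin_left h) y (mem_lin_right h) _ (trd_mem_lin h)
    h.1 (Ne.symm (trd_ne_left h)) (Ne.symm (trd_ne_right h))

lemma rep_comm (ρ : S.Rep R) {x y : P} (h : S.Collinear x y) :
    ρ.r x * ρ.r y = ρ.r y * ρ.r x := by
  rw [rep_line ρ h, rep_line ρ (col_symm h), trd_comm h]

/-- the target set: identity, generators, and products of two non-collinear generators -/
def TT (S : SlimPLS P) (ρ : S.Rep R) : Set R :=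
  {1} ∪ Set.range ρ.r ∪
    {g | ∃ y z, y ≠ z ∧ ¬ S.Collinear y z ∧ g = ρ.r y * ρ.r z}

lemma one_mem_TT : (1 : R) ∈ TT S ρ := Or.inl (Or.inl rfl)
lemma range_mem_TT (x : P) : ρ.r x ∈ TT S ρ := Or.inl (Or.inr ⟨x, rfl⟩)

lemma two_gen_TT (p q : P) : ρ.r p * ρ.r q ∈ TT S ρ := by
  by_cases hpq : p = q
  · subst hpq; rw [rr_sq]; exact one_mem_TT
  by_cases hc : S.Collinear p q
  · rw [rep_line ρ hc]; exact range_mem_TT _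
  · exact Or.inr ⟨p, q, hpq, hc, rfl⟩

/-- rewriting a product of two non-collinear generators through a common neighbour -/
lemma switch (ρ : S.Rep R) {y z u : P} (hyu : S.Collinear y u) (huz : S.Collinear u z) :
    ρ.r y * ρ.r z = ρ.r (S.trd y u) * ρ.r (S.trd u z) := by
  rw [← rep_line ρ hyu, ← rep_line ρ huz]
  rw [mul_assoc, ← mul_assoc (ρ.r u), rr_sq, one_mul]

/-- if x is non-collinear with y and with all third points `trd y u` (u ∈ perp),
then x is collinear with every common neighbour u of y,z -/
lemma perp_forcing (hGQ : S.IsGQ t) {x y : P} (hxy : ¬ S.Collinear x y) (hxyne : x ≠ y)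
    {u : P} (hyu : S.Collinear y u)
    (hno : x ≠ S.trd y u ∧ ¬ S.Collinear x (S.trd y u)) : S.Collinear x u := by
  have hxu : x ≠ u := by
    rintro rfl; exact hxy (col_symm hyu)
  have hxl : x ∉ S.lin y u := by
    intro hx
    rcases mem_lin_cases hyu hx with h | h | h
    · exact hxyne h
    · exact hxu h
    · exact hno.1 h
  obtain ⟨w, ⟨hwl, hxw⟩, _⟩ := ax4 hGQ (lin_mem hyu) hxl
  rcases mem_lin_cases hyu hwl with h | h | h
  · subst h; exact absurd hxw hxy
  · subst h; exact hxw
  · subst h; exact absurd hxw hno.2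

/-- x collinear with all of perp(y,z) and with z is impossible -/
lemma perp_all_col_contra (hGQ : S.IsGQ t) {x y z : P} (hyz : ¬ S.Collinear y z)
    (hyzne : y ≠ z) (hxz : S.Collinear x z)
    (hall : ∀ u ∈ S.perp y z, S.Collinear x u) : False := by
  obtain ⟨u, hu, v, hv, huv⟩ := perp_two hGQ hyzne hyz
  have h1 : u = S.trd x z := no_triangle hGQ hxz (col_symm (hall u hu)) (col_symm hu.2)
  have h2 : v = S.trd x z := no_triangle hGQ hxz (col_symm (hall v hv)) (col_symm hv.2)
  exact huv (h1.trans h2.symm)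

/-- third points on distinct lines through u are non-collinear -/
lemma trd_trd_noncol (hGQ : S.IsGQ t) {u y x : P} (hyu : S.Collinear y u)
    (hux : S.Collinear u x) (hxy : ¬ S.Collinear x y) (hxyne : x ≠ y) :
    ¬ S.Collinear (S.trd y u) (S.trd u x) ∧ S.trd y u ≠ S.trd u x := by
  have hcb : S.Collinear u (S.trd y u) := col_trd_right hyu
  have hca : S.Collinear u (S.trd u x) := col_trd_left hux
  have key : S.trd u x ∉ S.lin u (S.trd y u) := by
    have hluy : S.lin u (S.trd y u) = S.lin y u :=
      (eq_lin hcb (lin_mem hyu) (mem_lin_right hyu) (trd_mem_lin hyu)).symm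
    rw [hluy]
    intro hmem
    rcases mem_lin_cases hyu hmem with h | h | h
    · exact hxy (h ▸ col_trd_right hux)
    · exact (trd_ne_left hux) h
    · have hll : S.lin y u = S.lin u x := S.unique_line _ (lin_mem hyu) _ (lin_mem hux)
        u (S.trd u x) (Ne.symm (trd_ne_left hux)) (mem_lin_right hyu) hmem
        (mem_lin_left hux) (trd_mem_lin hux)
      have hy : y ∈ S.lin u x := hll ▸ mem_lin_left hyu
      rcases mem_lin_cases hux hy with h' | h' | h'
      · exact (col_ne hyu) h'
      · exact hxyne h'.symm
      · exact hxy (by rw [h']; exact col_trd_right hux)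
  exact (noncol_of_two_lines hGQ hcb hca key).imp id id

/-- The key trichotomy for words r x * (r y * r z) with y,z non-collinear. -/
lemma key3 (hGQ : S.IsGQ t) (ρ : S.Rep R) {x y z : P}
    (hyzne : y ≠ z) (hyz : ¬ S.Collinear y z)
    (hxyne : x ≠ y) (hxy : ¬ S.Collinear x y) :
    (ρ.r x * (ρ.r y * ρ.r z) ∈ TT S ρ) ∨ (S.Hard x y z) := by
  classical
  by_cases hC : ∃ u ∈ S.perp y z, x = S.trd y u ∨ S.Collinear x (S.trd y u)
  · left
    obtain ⟨u, hu, hcase⟩ := hC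
    have hsw : ρ.r y * ρ.r z = ρ.r (S.trd y u) * ρ.r (S.trd u z) :=
      switch ρ hu.1 (col_symm hu.2)
    rw [hsw, ← mul_assoc]
    rcases hcase with h | h
    · rw [← h, rr_sq, one_mul]; exact range_mem_TT _
    · rw [rep_line ρ h]; exact two_gen_TT _ _
  · push_neg at hC
    have hall : ∀ u ∈ S.perp y z, S.Collinear x u := by
      intro u hu
      exact perp_forcing hGQ hxy hxyne hu.1 ⟨(hC u hu).1, (hC u hu).2⟩
    by_cases hxz : S.Collinear x z
    · exact absurd (perp_all_col_contra hGQ hyz hyzne hxz hall) (fun h => h)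
    by_cases hxzeq : x = z
    · -- the case r x * r y * r x : always in TT
      subst hxzeq
      left
      obtain ⟨u, hxu, hyu⟩ := common_neighbor hGQ hxyne hxy
      -- r y * r x = r (trd y u) * r (trd u x)
      have hsw : ρ.r y * ρ.r x = ρ.r (S.trd y u) * ρ.r (S.trd u x) :=
        switch ρ hyu (col_symm hxu)
      set b := S.trd y u with hb
      set a := S.trd u x with ha
      have hxb : ¬ S.Collinear x b ∧ x ≠ b := by
        have := hC u ⟨hyu, hxu⟩
        exact ⟨this.2, this.1⟩
      have hxa : S.Collinear x a := col_trd_right (col_symm hxu)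
      have hba : ¬ S.Collinear b a ∧ b ≠ a :=
        trd_trd_noncol hGQ hyu (col_symm hxu) hxy hxyne
      rw [hsw, ← mul_assoc]
      -- now handle r x * r b * r a
      by_cases hC2 : ∃ w ∈ S.perp b a, x = S.trd b w ∨ S.Collinear x (S.trd b w)
      · obtain ⟨w, hw, hcase⟩ := hC2
        have hsw2 : ρ.r b * ρ.r a = ρ.r (S.trd b w) * ρ.r (S.trd w a) :=
          switch ρ hw.1 (col_symm hw.2)
        rw [mul_assoc, hsw2, ← mul_assoc]
        rcases hcase with h | h
        · rw [← h, rr_sq, one_mul]; exact range_mem_TT _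
        · rw [rep_line ρ h]; exact two_gen_TT _ _
      · push_neg at hC2
        exfalso
        have hall2 : ∀ w ∈ S.perp b a, S.Collinear x w := by
          intro w hw
          exact perp_forcing hGQ hxb.1 hxb.2 hw.1 ⟨(hC2 w hw).1, (hC2 w hw).2⟩
        exact perp_all_col_contra hGQ hba.1 hba.2 hxa hall2
    · right
      exact ⟨⟨hxy, hxyne⟩, ⟨hxz, hxzeq⟩, ⟨hyz, hyzne⟩,
        fun u hyu hzu => hall u ⟨hyu, hzu⟩⟩

/-- Closure: multiplying TT by a generator stays in TT, provided all hard values are in TT. -/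
lemma TT_mul (hGQ : S.IsGQ t) (ρ : S.Rep R)
    (hHard : ∀ x y z, S.Hard x y z → ρ.r x * (ρ.r y * ρ.r z) ∈ TT S ρ)
    (p : P) {s : R} (hs : s ∈ TT S ρ) : ρ.r p * s ∈ TT S ρ := by
  rcases hs with (h1 | ⟨q, rfl⟩) | ⟨y, z, hyzne, hyz, rfl⟩
  · rw [Set.mem_singleton_iff] at h1
    subst h1; rw [mul_one]; exact range_mem_TT p
  · exact two_gen_TT p q
  · by_cases hpy : p = y
    · subst hpy; rw [← mul_assoc, rr_sq, one_mul]; exact range_mem_TT z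
    by_cases hc : S.Collinear p y
    · rw [← mul_assoc, rep_line ρ hc]; exact two_gen_TT _ _
    · rcases key3 hGQ ρ hyzne hyz hpy hc with h | h
      · exact h
      · exact hHard p y z h

/-- All of R lies in TT when all hard values do. -/
lemma all_TT (hGQ : S.IsGQ t) (ρ : S.Rep R)
    (hHard : ∀ x y z, S.Hard x y z → ρ.r x * (ρ.r y * ρ.r z) ∈ TT S ρ)
    (g : R) : g ∈ TT S ρ := by
  have hg : g ∈ Subgroup.closure (Set.range ρ.r) := by rw [ρ.gen]; trivial
  have main : (∀ s ∈ TT S ρ, g * s ∈ TT S ρ) ∧ (∀ s ∈ TT S ρ, g⁻¹ * s ∈ TT S ρ) := by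
    induction hg using Subgroup.closure_induction with
    | mem x hx =>
      obtain ⟨p, rfl⟩ := hx
      refine ⟨fun s hs => TT_mul hGQ ρ hHard p hs, fun s hs => ?_⟩
      rw [rr_inv]; exact TT_mul hGQ ρ hHard p hs
    | one => constructor <;> (intro s hs; simpa using hs)
    | mul a b _ _ ha hb =>
      refine ⟨fun s hs => ?_, fun s hs => ?_⟩
      · rw [mul_assoc]; exact ha.1 _ (hb.1 s hs)
      · rw [mul_inv_rev, mul_assoc]; exact hb.2 _ (ha.2 s hs)
    | inv a _ ha =>
      refine ⟨fun s hs => ha.2 s hs, fun s hs => ?_⟩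
      rw [inv_inv]; exact ha.1 s hs
  have := main.1 1 one_mem_TT
  rwa [mul_one] at this

end SlimPLS

namespace SlimPLS

variable {P : Type*} [Fintype P] {S : SlimPLS P} {t : ℕ}

noncomputable def NB (S : SlimPLS P) (x : P) : Finset P :=
  Finset.univ.filter (fun w => S.Collinear x w)

noncomputable def Lns (S : SlimPLS P) (x : P) : Finset (Finset P) :=
  Finset.univ.filter (fun l => l ∈ S.lines ∧ x ∈ l)

noncomputable def Nn (S : SlimPLS P) (y : P) : Finset P :=
  Finset.univ.filter (fun x => ¬ S.Collinear y x ∧ x ≠ y)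

noncomputable def Zs (S : SlimPLS P) (y z : P) : Finset P :=
  Finset.univ.filter (fun x => ¬ S.Collinear y x ∧ ¬ S.Collinear z x ∧ x ≠ y ∧ x ≠ z)

noncomputable def Cs (S : SlimPLS P) (y z : P) : Finset P :=
  Finset.univ.filter (fun u => S.Collinear y u ∧ S.Collinear z u)

@[simp] lemma mem_NB {x w : P} : w ∈ NB S x ↔ S.Collinear x w := by simp [NB]
@[simp] lemma mem_Lns {x : P} {l : Finset P} : l ∈ Lns S x ↔ l ∈ S.lines ∧ x ∈ l := by
  simp [Lns]
@[simp] lemma mem_Nn {y x : P} : x ∈ Nn S y ↔ ¬ S.Collinear y x ∧ x ≠ y := by simp [Nn]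
@[simp] lemma mem_Zs {y z x : P} :
    x ∈ Zs S y z ↔ ¬ S.Collinear y x ∧ ¬ S.Collinear z x ∧ x ≠ y ∧ x ≠ z := by simp [Zs]
@[simp] lemma mem_Cs {y z u : P} : u ∈ Cs S y z ↔ S.Collinear y u ∧ S.Collinear z u := by
  simp [Cs]

lemma col_irrefl (x : P) : ¬ S.Collinear x x := fun h => h.1 rfl

lemma Lns_card (hGQ : S.IsGQ t) (x : P) : (Lns S x).card = t + 1 := by
  have h : S.thru x = ↑(Lns S x) := by ext l; simp [thru]
  have h2 := thru_ncard hGQ x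
  rw [h, Set.ncard_coe_finset] at h2
  exact h2

lemma Cs_card (hGQ : S.IsGQ t) {y z : P} (hne : y ≠ z) (hnc : ¬ S.Collinear y z) :
    (Cs S y z).card = t + 1 := by
  have h : S.perp y z = ↑(Cs S y z) := by ext u; simp [perp]
  have h2 := perp_ncard hGQ hne hnc
  rw [h, Set.ncard_coe_finset] at h2
  exact h2

lemma NB_eq_biUnion (x : P) : NB S x = (Lns S x).biUnion (fun l => l.erase x) := by
  classical
  ext w
  simp only [mem_NB, Finset.mem_biUnion, mem_Lns, Finset.mem_erase]
  constructor
  · intro h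
    exact ⟨S.lin x w, ⟨lin_mem h, mem_lin_left h⟩, ⟨Ne.symm (col_ne h), mem_lin_right h⟩⟩
  · rintro ⟨l, ⟨hl, hx⟩, hwx, hw⟩
    exact line_col hl hx hw (Ne.symm hwx)

lemma Lns_disj (x : P) : ∀ l₁ ∈ Lns S x, ∀ l₂ ∈ Lns S x, l₁ ≠ l₂ →
    Disjoint (l₁.erase x) (l₂.erase x) := by
  intro l₁ h₁ l₂ h₂ hne
  rw [Finset.disjoint_left]
  intro w hw₁ hw₂
  rw [Finset.mem_erase] at hw₁ hw₂
  rw [mem_Lns] at h₁ h₂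
  exact hne (S.unique_line l₁ h₁.1 l₂ h₂.1 x w (Ne.symm hw₁.1) h₁.2 hw₁.2 h₂.2 hw₂.2)

lemma NB_filter_card (x : P) (p : P → Prop) [DecidablePred p] :
    ((NB S x).filter p).card = ∑ l ∈ Lns S x, ((l.erase x).filter p).card := by
  classical
  rw [NB_eq_biUnion, Finset.filter_biUnion]
  exact Finset.card_biUnion (fun l₁ h₁ l₂ h₂ hne =>
    Finset.disjoint_filter_filter (Lns_disj x l₁ h₁ l₂ h₂ hne))

lemma erase_card {l : Finset P} (hl : l ∈ S.lines) {x : P} (hx : x ∈ l) :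
    (l.erase x).card = 2 := by
  rw [Finset.card_erase_of_mem hx, S.three_points l hl]

lemma NB_card (hGQ : S.IsGQ t) (x : P) : (NB S x).card = 2 * (t + 1) := by
  classical
  have h : (NB S x).filter (fun _ => True) = NB S x := Finset.filter_true _
  rw [← h, NB_filter_card]
  rw [Finset.sum_congr rfl (fun l hl => ?_), Finset.sum_const, Lns_card hGQ x,
    smul_eq_mul, mul_comm]
  rw [Finset.filter_true, erase_card (mem_Lns.1 hl).1 (mem_Lns.1 hl).2]

/-- sum over lines through x with one exceptional zero line -/
lemma sum_Lns_one (hGQ : S.IsGQ t) {x : P} (f : Finset P → ℕ) {l0 : Finset P}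
    (h0 : l0 ∈ Lns S x) (hf0 : f l0 = 0) (c : ℕ)
    (hf : ∀ l ∈ Lns S x, l ≠ l0 → f l = c) :
    ∑ l ∈ Lns S x, f l = c * t := by
  classical
  rw [← Finset.sum_erase_add _ _ h0, hf0, add_zero]
  rw [Finset.sum_congr rfl (fun l hl => hf l (Finset.mem_of_mem_erase hl)
    (Finset.ne_of_mem_erase hl))]
  rw [Finset.sum_const, smul_eq_mul, Finset.card_erase_of_mem h0, Lns_card hGQ x]
  simp [mul_comm]

/-- sum over lines through x with two exceptional zero lines -/
lemma sum_Lns_two (hGQ : S.IsGQ t) {x : P} (f : Finset P → ℕ) {l0 l1 : Finset P}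
    (h0 : l0 ∈ Lns S x) (h1 : l1 ∈ Lns S x) (hne : l0 ≠ l1)
    (hf0 : f l0 = 0) (hf1 : f l1 = 0) (c : ℕ)
    (hf : ∀ l ∈ Lns S x, l ≠ l0 → l ≠ l1 → f l = c) :
    ∑ l ∈ Lns S x, f l = c * (t - 1) := by
  classical
  rw [← Finset.sum_erase_add _ _ h0, hf0, add_zero]
  have h1' : l1 ∈ (Lns S x).erase l0 := Finset.mem_erase.2 ⟨Ne.symm hne, h1⟩
  rw [← Finset.sum_erase_add _ _ h1', hf1, add_zero]
  rw [Finset.sum_congr rfl (fun l hl => hf l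
    (Finset.mem_of_mem_erase (Finset.mem_of_mem_erase hl))
    (Finset.ne_of_mem_erase (Finset.mem_of_mem_erase hl)) (Finset.ne_of_mem_erase hl))]
  rw [Finset.sum_const, smul_eq_mul, Finset.card_erase_of_mem h1',
    Finset.card_erase_of_mem h0, Lns_card hGQ x]
  simp [mul_comm]

/-- generic double counting -/
lemma double_count {α β : Type*} (A : Finset α) (B : Finset β) (r : α → β → Prop)
    [∀ a b, Decidable (r a b)] :
    ∑ a ∈ A, (B.filter (fun b => r a b)).card = ∑ b ∈ B, (A.filter (fun a => r a b)).card := by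
  simp only [Finset.card_filter]
  rw [Finset.sum_comm]

end SlimPLS

namespace SlimPLS

variable {P : Type*} [Fintype P] {S : SlimPLS P} {t : ℕ}

/-- for q collinear with y, the number of neighbours of q non-collinear with y is 2t -/
lemma count_nb_nn (hGQ : S.IsGQ t) {y q : P} (hq : S.Collinear y q) :
    ((Nn S y).filter (fun w => S.Collinear q w)).card = 2 * t := by
  classical
  have hqy : S.Collinear q y := col_symm hq
  have hset : (Nn S y).filter (fun w => S.Collinear q w)
      = (NB S q).filter (fun w => ¬ S.Collinear y w ∧ w ≠ y) := by
    ext w; simp only [Finset.mem_filter, mem_Nn, mem_NB]; tauto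
  rw [hset, NB_filter_card]
  refine sum_Lns_one hGQ _ (l0 := S.lin q y) (mem_Lns.2 ⟨lin_mem hqy, mem_lin_left hqy⟩) ?_ 2 ?_
  · rw [Finset.card_eq_zero, Finset.filter_eq_empty_iff]
    intro w hw
    rcases mem_lin_cases hqy (Finset.mem_of_mem_erase hw) with h | h | h
    · exact absurd h (Finset.mem_erase.1 hw).1
    · subst h; simp
    · subst h; simp only [not_and, not_not]
      intro hc; exact absurd (col_trd_right hqy) hc
  · intro l hl hlne
    rw [mem_Lns] at hl
    have hynl : y ∉ l := by
      intro hy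
      exact hlne (eq_lin hqy hl.1 hl.2 hy)
    rw [Finset.filter_true_of_mem, erase_card hl.1 hl.2]
    intro w hw
    have hwl := Finset.mem_of_mem_erase hw
    have hwq : w ≠ q := (Finset.mem_erase.1 hw).1
    have hcqw : S.Collinear q w := line_col hl.1 hl.2 hwl (Ne.symm hwq)
    constructor
    · intro hyw
      have h3 : y = S.trd q w := no_triangle hGQ hcqw hq hyw
      have h4 : l = S.lin q w := eq_lin hcqw hl.1 hl.2 hwl
      exact hynl (h4 ▸ (h3 ▸ trd_mem_lin hcqw))
    · intro h; exact hynl (h ▸ hwl)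

/-- for z non-collinear with y, the number of neighbours of z non-collinear with y is t+1 -/
lemma count_nb_nn' (hGQ : S.IsGQ t) {y z : P} (hne : y ≠ z) (hnc : ¬ S.Collinear y z) :
    ((Nn S y).filter (fun w => S.Collinear z w)).card = t + 1 := by
  classical
  have hset : (Nn S y).filter (fun w => S.Collinear z w)
      = (NB S z).filter (fun w => ¬ S.Collinear y w ∧ w ≠ y) := by
    ext w; simp only [Finset.mem_filter, mem_Nn, mem_NB]; tauto
  rw [hset, NB_filter_card]
  have hone : ∀ l ∈ Lns S z, (((l.erase z)).filter (fun w => ¬ S.Collinear y w ∧ w ≠ y)).card = 1 := by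
    intro l hl
    rw [mem_Lns] at hl
    have hynl : y ∉ l := by
      intro hy
      exact hnc (line_col hl.1 hy hl.2 hne)
    obtain ⟨w₀, ⟨hw₀l, hw₀c⟩, hw₀u⟩ := ax4 hGQ hl.1 hynl
    have hw₀z : w₀ ≠ z := by rintro rfl; exact hnc hw₀c
    obtain ⟨a, b, hab, he⟩ := Finset.card_eq_two.1 (erase_card hl.1 hl.2)
    have hmem : ∀ w ∈ l.erase z, w = a ∨ w = b := by
      intro w hw; rw [he] at hw; simpa using hw
    have hal : a ∈ l := Finset.mem_of_mem_erase (by rw [he]; simp)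
    have hbl : b ∈ l := Finset.mem_of_mem_erase (by rw [he]; simp)
    have haz : a ≠ z := by
      have : a ∈ l.erase z := by rw [he]; simp
      exact (Finset.mem_erase.1 this).1
    have hbz : b ≠ z := by
      have : b ∈ l.erase z := by rw [he]; simp
      exact (Finset.mem_erase.1 this).1
    have hay : a ≠ y := by rintro rfl; exact hynl hal
    have hby : b ≠ y := by rintro rfl; exact hynl hbl
    have hw₀ab : w₀ = a ∨ w₀ = b := hmem w₀ (Finset.mem_erase.2 ⟨hw₀z, hw₀l⟩)
    have key : ∀ a' b' : P, a' ≠ b' → l.erase z = {a', b'} → w₀ = a' → b' ≠ y →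
        ((l.erase z).filter (fun w => ¬ S.Collinear y w ∧ w ≠ y)).card = 1 := by
      intro a' b' hab' he' hw' hb'y
      rw [Finset.card_eq_one]
      refine ⟨b', Finset.eq_singleton_iff_unique_mem.2 ⟨?_, ?_⟩⟩
      · refine Finset.mem_filter.2 ⟨by rw [he']; simp, ?_, hb'y⟩
        intro hc
        have : b' = w₀ := hw₀u b' ⟨Finset.mem_of_mem_erase (by rw [he']; simp), hc⟩
        rw [hw'] at this
        exact hab' this.symm
      · intro x hx
        obtain ⟨hx1, hx2, _⟩ := Finset.mem_filter.1 hx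
        rw [he'] at hx1
        rcases Finset.mem_insert.1 hx1 with h | h
        · exfalso
          rw [h, ← hw'] at hx2
          exact hx2 hw₀c
        · exact Finset.mem_singleton.1 h
    rcases hw₀ab with h | h
    · exact key a b hab he h hby
    · refine key b a (Ne.symm hab) ?_ h hay
      rw [he]
      ext w
      simp only [Finset.mem_insert, Finset.mem_singleton]
      tauto
  rw [Finset.sum_congr rfl hone, Finset.sum_const, Lns_card hGQ z, smul_eq_mul, mul_one]

/-- number of non-neighbours of a point -/
lemma Nn_card (hGQ : S.IsGQ t) (y : P) : (Nn S y).card = 4 * t := by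
  classical
  have base := double_count (NB S y) (Nn S y) (fun q w => S.Collinear q w)
  have lhs : ∑ q ∈ NB S y, ((Nn S y).filter (fun w => S.Collinear q w)).card
      = (2 * (t + 1)) * (2 * t) := by
    rw [Finset.sum_congr rfl (fun q hq => count_nb_nn hGQ (mem_NB.1 hq)),
      Finset.sum_const, NB_card hGQ, smul_eq_mul]
  have rhs : ∑ w ∈ Nn S y, ((NB S y).filter (fun q => S.Collinear q w)).card
      = (Nn S y).card * (t + 1) := by
    rw [Finset.sum_congr rfl (fun w hw => ?_), Finset.sum_const, smul_eq_mul]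
    have hw' := mem_Nn.1 hw
    have hset : (NB S y).filter (fun q => S.Collinear q w) = Cs S y w := by
      ext q
      simp only [Finset.mem_filter, mem_NB, mem_Cs]
      exact and_congr_right (fun _ => ⟨col_symm, col_symm⟩)
    rw [hset, Cs_card hGQ (Ne.symm hw'.2) hw'.1]
  rw [lhs, rhs] at base
  have ht1 : 0 < t + 1 := Nat.succ_pos t
  nlinarith [base]

lemma card_P (hGQ : S.IsGQ t) : Fintype.card P = 6 * t + 3 := by
  classical
  obtain ⟨y0⟩ := S.nonempty_pts
  have h1 := Finset.card_filter_add_card_filter_not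
    (s := (Finset.univ : Finset P)) (p := fun w => S.Collinear y0 w)
  have hNB : (Finset.univ.filter (fun w => S.Collinear y0 w)).card = 2 * (t + 1) :=
    NB_card hGQ y0
  have h2 := Finset.card_filter_add_card_filter_not
    (s := (Finset.univ.filter (fun w => ¬ S.Collinear y0 w) : Finset P)) (p := fun w => w = y0)
  have hy1 : ((Finset.univ.filter (fun w => ¬ S.Collinear y0 w)).filter (fun w => w = y0))
      = {y0} := by
    refine Finset.eq_singleton_iff_unique_mem.2 ⟨?_, ?_⟩
    · exact Finset.mem_filter.2 ⟨Finset.mem_filter.2 ⟨Finset.mem_univ _, col_irrefl y0⟩, rfl⟩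
    · exact fun x hx => (Finset.mem_filter.1 hx).2
  have hy2 : ((Finset.univ.filter (fun w => ¬ S.Collinear y0 w)).filter (fun w => ¬ w = y0))
      = Nn S y0 := by
    ext w
    simp only [Finset.mem_filter, Finset.mem_univ, true_and, mem_Nn] <;> tauto
  rw [hy1, hy2, Finset.card_singleton, Nn_card hGQ] at h2
  rw [hNB, ← h2, Finset.card_univ] at h1
  omega

lemma Zs_card (hGQ : S.IsGQ t) {y z : P} (hne : y ≠ z) (hnc : ¬ S.Collinear y z) :
    (Zs S y z).card + (t + 2) = 4 * t := by
  classical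
  have h1 := Finset.card_filter_add_card_filter_not
    (s := Nn S y) (p := fun w => S.Collinear z w)
  rw [count_nb_nn' hGQ hne hnc] at h1
  have h2 := Finset.card_filter_add_card_filter_not
    (s := (Nn S y).filter (fun w => ¬ S.Collinear z w)) (p := fun w => w = z)
  have hz1 : (((Nn S y).filter (fun w => ¬ S.Collinear z w)).filter (fun w => w = z))
      = {z} := by
    refine Finset.eq_singleton_iff_unique_mem.2 ⟨?_, ?_⟩
    · exact Finset.mem_filter.2 ⟨Finset.mem_filter.2 ⟨mem_Nn.2 ⟨hnc, Ne.symm hne⟩,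
        col_irrefl z⟩, rfl⟩
    · exact fun x hx => (Finset.mem_filter.1 hx).2
  have hz2 : (((Nn S y).filter (fun w => ¬ S.Collinear z w)).filter (fun w => ¬ w = z))
      = Zs S y z := by
    ext w
    simp only [Finset.mem_filter, mem_Nn, mem_Zs]
    tauto
  rw [hz1, hz2, Finset.card_singleton] at h2
  rw [← h2, Nn_card hGQ] at h1
  omega

end SlimPLS

namespace SlimPLS

variable {P : Type*} [Fintype P] {S : SlimPLS P} {t : ℕ}

lemma count_Zs_u (hGQ : S.IsGQ t) {y z : P} (hne : y ≠ z) (hnc : ¬ S.Collinear y z)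
    {u : P} (hu : u ∈ Cs S y z) :
    ((Zs S y z).filter (fun x => S.Collinear u x)).card = 2 * (t - 1) := by
  classical
  obtain ⟨hyu, hzu⟩ := mem_Cs.1 hu
  have huy : S.Collinear u y := col_symm hyu
  have huz : S.Collinear u z := col_symm hzu
  have hset : (Zs S y z).filter (fun x => S.Collinear u x)
      = (NB S u).filter (fun w => ¬ S.Collinear y w ∧ ¬ S.Collinear z w ∧ w ≠ y ∧ w ≠ z) := by
    ext w; simp only [Finset.mem_filter, mem_Zs, mem_NB]; tauto
  rw [hset, NB_filter_card]
  have hl01 : S.lin u y ≠ S.lin u z := by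
    intro h
    have hz : z ∈ S.lin u y := h ▸ mem_lin_right huz
    exact hnc (line_col (lin_mem huy) (mem_lin_right huy) hz hne)
  refine sum_Lns_two hGQ _ (l0 := S.lin u y) (l1 := S.lin u z)
    (mem_Lns.2 ⟨lin_mem huy, mem_lin_left huy⟩)
    (mem_Lns.2 ⟨lin_mem huz, mem_lin_left huz⟩) hl01 ?_ ?_ 2 ?_
  · rw [Finset.card_eq_zero, Finset.filter_eq_empty_iff]
    intro w hw
    rcases mem_lin_cases huy (Finset.mem_of_mem_erase hw) with h | h | h
    · exact absurd h (Finset.mem_erase.1 hw).1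
    · subst h; simp
    · subst h
      exact fun hx => hx.1 (col_trd_right huy)
  · rw [Finset.card_eq_zero, Finset.filter_eq_empty_iff]
    intro w hw
    rcases mem_lin_cases huz (Finset.mem_of_mem_erase hw) with h | h | h
    · exact absurd h (Finset.mem_erase.1 hw).1
    · subst h
      exact fun hx => hx.2.2.2 rfl
    · subst h
      exact fun hx => hx.2.1 (col_trd_right huz)
  · intro l hl hne0 hne1
    rw [mem_Lns] at hl
    have hyl : y ∉ l := fun hy => hne0 (eq_lin huy hl.1 hl.2 hy)
    have hzl : z ∉ l := fun hz => hne1 (eq_lin huz hl.1 hl.2 hz)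
    rw [Finset.filter_true_of_mem, erase_card hl.1 hl.2]
    intro w hw
    have hwl := Finset.mem_of_mem_erase hw
    have hwu : w ≠ u := (Finset.mem_erase.1 hw).1
    have hcuw : S.Collinear u w := line_col hl.1 hl.2 hwl (Ne.symm hwu)
    have hlw : l = S.lin u w := eq_lin hcuw hl.1 hl.2 hwl
    refine ⟨?_, ?_, ?_, ?_⟩
    · intro hyw
      have h3 : y = S.trd u w := no_triangle hGQ hcuw hyu hyw
      exact hyl (hlw ▸ (h3 ▸ trd_mem_lin hcuw))
    · intro hzw
      have h3 : z = S.trd u w := no_triangle hGQ hcuw hzu hzw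
      exact hzl (hlw ▸ (h3 ▸ trd_mem_lin hcuw))
    · intro h; exact hyl (h ▸ hwl)
    · intro h; exact hzl (h ▸ hwl)

lemma sum_c (hGQ : S.IsGQ t) {y z : P} (hne : y ≠ z) (hnc : ¬ S.Collinear y z) :
    ∑ x ∈ Zs S y z, ((Cs S y z).filter (fun u => S.Collinear x u)).card
      = (t + 1) * (2 * (t - 1)) := by
  classical
  rw [double_count (Zs S y z) (Cs S y z) (fun x u => S.Collinear x u)]
  rw [Finset.sum_congr rfl (fun u hu => ?_), Finset.sum_const, Cs_card hGQ hne hnc,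
    smul_eq_mul]
  rw [show ((Zs S y z).filter (fun x => S.Collinear x u))
      = ((Zs S y z).filter (fun x => S.Collinear u x)) from
    Finset.filter_congr (fun x _ => ⟨col_symm, col_symm⟩)]
  exact count_Zs_u hGQ hne hnc hu

lemma count_Zs_uv (hGQ : S.IsGQ t) {y z : P} (hne : y ≠ z) (hnc : ¬ S.Collinear y z)
    {u v : P} (hu : u ∈ Cs S y z) (hv : v ∈ Cs S y z) (huv : u ≠ v) :
    ((Zs S y z).filter (fun x => S.Collinear x u ∧ S.Collinear x v)).card = t - 1 := by
  classical
  have hu' : u ∈ S.perp y z := mem_Cs.1 hu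
  have hv' : v ∈ S.perp y z := mem_Cs.1 hv
  have hncuv : ¬ S.Collinear u v := perp_arc hGQ hne hu' hv' huv
  have hyCuv : y ∈ Cs S u v := mem_Cs.2 ⟨col_symm hu'.1, col_symm hv'.1⟩
  have hzCuv : z ∈ Cs S u v := mem_Cs.2 ⟨col_symm hu'.2, col_symm hv'.2⟩
  have hset : (Zs S y z).filter (fun x => S.Collinear x u ∧ S.Collinear x v)
      = (Cs S u v) \ {y, z} := by
    ext w
    simp only [Finset.mem_filter, mem_Zs, mem_Cs, Finset.mem_sdiff, Finset.mem_insert,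
      Finset.mem_singleton]
    constructor
    · rintro ⟨⟨_, _, hwy, hwz⟩, hcu, hcv⟩
      exact ⟨⟨col_symm hcu, col_symm hcv⟩, by tauto⟩
    · rintro ⟨⟨hcu, hcv⟩, hwyz⟩
      push_neg at hwyz
      have hwperp : w ∈ S.perp u v := ⟨hcu, hcv⟩
      have hyperp : y ∈ S.perp u v := ⟨col_symm hu'.1, col_symm hv'.1⟩
      have hzperp : z ∈ S.perp u v := ⟨col_symm hu'.2, col_symm hv'.2⟩
      refine ⟨⟨?_, ?_, hwyz.1, hwyz.2⟩, col_symm hcu, col_symm hcv⟩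
      · exact perp_arc hGQ huv hyperp hwperp (Ne.symm hwyz.1)
      · exact perp_arc hGQ huv hzperp hwperp (Ne.symm hwyz.2)
  rw [hset, Finset.card_sdiff_of_subset]
  · rw [Cs_card hGQ huv hncuv, Finset.card_pair hne]; omega
  · intro w hw
    rcases Finset.mem_insert.1 hw with rfl | hw'
    · exact hyCuv
    · rw [Finset.mem_singleton.1 hw']; exact hzCuv

lemma sum_c2 (hGQ : S.IsGQ t) {y z : P} (hne : y ≠ z) (hnc : ¬ S.Collinear y z) :
    ∑ x ∈ Zs S y z, (((Cs S y z).filter (fun u => S.Collinear x u)).offDiag).card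
      = ((t + 1) * t) * (t - 1) := by
  classical
  have hper : ∀ x : P, ((Cs S y z).filter (fun u => S.Collinear x u)).offDiag
      = ((Cs S y z).offDiag).filter (fun p => S.Collinear x p.1 ∧ S.Collinear x p.2) := by
    intro x
    ext ⟨u, v⟩
    simp only [Finset.mem_offDiag, Finset.mem_filter]
    tauto
  rw [Finset.sum_congr rfl (fun x _ => by rw [hper x])]
  rw [double_count (Zs S y z) ((Cs S y z).offDiag)
    (fun x p => S.Collinear x p.1 ∧ S.Collinear x p.2)]
  rw [Finset.sum_congr rfl (fun p hp => ?_), Finset.sum_const, smul_eq_mul,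
    Finset.offDiag_card, Cs_card hGQ hne hnc]
  · rw [show (t+1) * (t+1) - (t+1) = (t+1) * t + (t+1) - (t+1) from by rw [Nat.mul_succ],
      Nat.add_sub_cancel]
  · obtain ⟨hp1, hp2, hp12⟩ := Finset.mem_offDiag.1 hp
    exact count_Zs_uv hGQ hne hnc hp1 hp2 hp12

lemma cle (c : ℕ) : c ≤ c * c := by
  cases c with
  | zero => simp
  | succ n => exact Nat.le_mul_of_pos_left _ (Nat.succ_pos n)

lemma higman (hGQ : S.IsGQ t) {y z : P} (hne : y ≠ z) (hnc : ¬ S.Collinear y z) :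
    t ≤ 4 := by
  classical
  by_contra hcon
  push_neg at hcon
  have ht : 1 ≤ t := t_pos hGQ
  set c : P → ℕ := fun x => ((Cs S y z).filter (fun u => S.Collinear x u)).card with hc
  have s1 : ∑ x ∈ Zs S y z, c x = (t + 1) * (2 * (t - 1)) := sum_c hGQ hne hnc
  have s2 : ∑ x ∈ Zs S y z, (c x * c x - c x) = ((t + 1) * t) * (t - 1) := by
    rw [← sum_c2 hGQ hne hnc]
    exact Finset.sum_congr rfl (fun x _ => by rw [Finset.offDiag_card])
  have hcardZ : (Zs S y z).card + (t + 2) = 4 * t := Zs_card hGQ hne hnc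
  have cs := Finset.sum_mul_sq_le_sq_mul_sq (Zs S y z) (fun x => (c x : ℤ)) (fun _ => (1 : ℤ))
  simp only [mul_one, one_pow] at cs
  have e1 : ∑ x ∈ Zs S y z, (c x : ℤ) = ((t + 1) * (2 * (t - 1)) : ℕ) := by
    rw [← s1]; push_cast; ring
  have e2 : ∑ x ∈ Zs S y z, (c x : ℤ) ^ 2
      = (((t + 1) * t) * (t - 1) : ℕ) + ((t + 1) * (2 * (t - 1)) : ℕ) := by
    rw [← s2, ← s1]
    push_cast
    rw [← Finset.sum_add_distrib]
    refine Finset.sum_congr rfl (fun x _ => ?_)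
    rw [Nat.cast_sub (cle (c x))]
    push_cast; ring
  have e3 : ∑ _x ∈ Zs S y z, (1 : ℤ) = ((Zs S y z).card : ℤ) := by
    rw [Finset.sum_const, nsmul_eq_mul, mul_one]
  rw [e1, e2, e3] at cs
  have hn : ((Zs S y z).card : ℤ) = 3 * (t : ℤ) - 2 := by
    have h := congrArg (Nat.cast : ℕ → ℤ) hcardZ
    push_cast at h; linarith
  rw [hn] at cs
  push_cast [Nat.cast_sub ht] at cs
  have ht' : (5 : ℤ) ≤ (t : ℤ) := by exact_mod_cast hcon
  have h1 : (0:ℤ) < (t : ℤ) - 1 := by linarith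
  have h2 : (0:ℤ) < (t : ℤ) + 1 := by linarith
  have h3 : (0:ℤ) < (t : ℤ) := by linarith
  have h4 : (0:ℤ) < (t : ℤ) - 4 := by linarith
  nlinarith [cs, mul_pos (mul_pos (mul_pos h2 h1) h3) h4]

lemma hard_mem_Zs {x y z : P} (h : S.Hard x y z) : x ∈ Zs S y z :=
  mem_Zs.2 ⟨fun hc => h.1.1 (col_symm hc), fun hc => h.2.1.1 (col_symm hc), h.1.2, h.2.1.2⟩

lemma hard_filter {x y z : P} (h : S.Hard x y z) :
    (Cs S y z).filter (fun u => S.Collinear x u) = Cs S y z :=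
  Finset.filter_true_of_mem (fun u hu => h.2.2.2 u (mem_Cs.1 hu).1 (mem_Cs.1 hu).2)

lemma unique_hard (hGQ : S.IsGQ t) {y z x1 x2 : P} (hne : y ≠ z) (hnc : ¬ S.Collinear y z)
    (ht2 : 2 ≤ t) (h1 : S.Hard x1 y z) (h2 : S.Hard x2 y z) : x1 = x2 := by
  classical
  by_contra h12
  set c : P → ℕ := fun x => ((Cs S y z).filter (fun u => S.Collinear x u)).card with hc
  set oc : P → ℕ := fun x => c x * c x - c x with hoc
  have hcx1 : c x1 = t + 1 := by
    simp only [hc]; rw [hard_filter h1, Cs_card hGQ hne hnc]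
  have hcx2 : c x2 = t + 1 := by
    simp only [hc]; rw [hard_filter h2, Cs_card hGQ hne hnc]
  have hx1Z : x1 ∈ Zs S y z := hard_mem_Zs h1
  have hx2Z : x2 ∈ Zs S y z := hard_mem_Zs h2
  have hx2Z' : x2 ∈ (Zs S y z).erase x1 := Finset.mem_erase.2 ⟨Ne.symm h12, hx2Z⟩
  set Z' := ((Zs S y z).erase x1).erase x2 with hZ'
  have s1 : ∑ x ∈ Zs S y z, c x = (t + 1) * (2 * (t - 1)) := sum_c hGQ hne hnc
  have s2 : ∑ x ∈ Zs S y z, oc x = ((t + 1) * t) * (t - 1) := by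
    rw [← sum_c2 hGQ hne hnc]
    exact Finset.sum_congr rfl (fun x _ => by rw [Finset.offDiag_card])
  have e1 : ∑ x ∈ Z', c x + c x2 + c x1 = ∑ x ∈ Zs S y z, c x := by
    rw [Finset.sum_erase_add _ _ hx2Z', Finset.sum_erase_add _ _ hx1Z]
  have e2 : ∑ x ∈ Z', oc x + oc x2 + oc x1 = ∑ x ∈ Zs S y z, oc x := by
    rw [Finset.sum_erase_add _ _ hx2Z', Finset.sum_erase_add _ _ hx1Z]
  have hcardZ : (Zs S y z).card + (t + 2) = 4 * t := Zs_card hGQ hne hnc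
  have hcardZ' : Z'.card + 2 = (Zs S y z).card := by
    rw [hZ', Finset.card_erase_of_mem hx2Z', Finset.card_erase_of_mem hx1Z]
    have h2le : 2 ≤ (Zs S y z).card := by
      have := Finset.one_lt_card.2 ⟨x1, hx1Z, x2, hx2Z, h12⟩
      omega
    omega
  have cs := Finset.sum_mul_sq_le_sq_mul_sq Z' (fun x => (c x : ℤ)) (fun _ => (1 : ℤ))
  simp only [mul_one, one_pow] at cs
  have e3 : ∑ _x ∈ Z', (1 : ℤ) = (Z'.card : ℤ) := by
    rw [Finset.sum_const, nsmul_eq_mul, mul_one]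
  have e4 : ∑ x ∈ Z', (c x : ℤ) ^ 2 = ∑ x ∈ Z', ((oc x : ℤ) + (c x : ℤ)) := by
    refine Finset.sum_congr rfl (fun x _ => ?_)
    simp only [hoc]
    rw [Nat.cast_sub (cle (c x))]
    push_cast; ring
  have hocnn : (0 : ℤ) ≤ ∑ x ∈ Z', (oc x : ℤ) :=
    Finset.sum_nonneg (fun x _ => by positivity)
  rw [e3, e4, Finset.sum_add_distrib] at cs
  have ht1 : 1 ≤ t := by omega
  have E1 : (∑ x ∈ Z', (c x : ℤ)) = 2 * ((t:ℤ) + 1) * ((t:ℤ) - 2) := by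
    have h := congrArg (Nat.cast : ℕ → ℤ) (e1.trans s1)
    push_cast [hcx1, hcx2, Nat.cast_sub ht1] at h
    linarith
  have hocx1 : (oc x1 : ℤ) = ((t : ℤ) + 1) * (t : ℤ) := by
    simp only [hoc]
    rw [Nat.cast_sub (cle (c x1)), hcx1]; push_cast; ring
  have hocx2 : (oc x2 : ℤ) = ((t : ℤ) + 1) * (t : ℤ) := by
    simp only [hoc]
    rw [Nat.cast_sub (cle (c x2)), hcx2]; push_cast; ring
  have E2 : (∑ x ∈ Z', (oc x : ℤ)) = ((t:ℤ) + 1) * (t:ℤ) * ((t:ℤ) - 3) := by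
    have h := congrArg (Nat.cast : ℕ → ℤ) (e2.trans s2)
    push_cast [Nat.cast_sub ht1] at h
    rw [hocx1, hocx2] at h
    linear_combination h
  have EZ : (Z'.card : ℤ) = 3 * (t:ℤ) - 4 := by
    have h1 := congrArg (Nat.cast : ℕ → ℤ) hcardZ'
    have h2 := congrArg (Nat.cast : ℕ → ℤ) hcardZ
    push_cast at h1 h2; linarith
  have ht' : (2 : ℤ) ≤ (t : ℤ) := by exact_mod_cast ht2
  have hT3 : (3 : ℤ) ≤ (t : ℤ) := by
    by_contra hlt
    push_neg at hlt
    have hT2 : (t : ℤ) = 2 := by omega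
    rw [E2, hT2] at hocnn
    norm_num at hocnn
  rw [E1, E2, EZ] at cs
  have p1 : (0:ℤ) < ((t:ℤ) + 1) * (t:ℤ) := by positivity
  nlinarith [cs, hT3, sq_nonneg (2 * (t:ℤ) - 5), p1,
    mul_nonneg (le_of_lt p1) (sq_nonneg (2 * (t:ℤ) - 5))]

end SlimPLS

namespace SlimPLS

variable {P : Type*} {S : SlimPLS P} {t : ℕ}

lemma nb_set_finite (hGQ : S.IsGQ t) (q : P) : {w | S.Collinear q w}.Finite := by
  have hsub : {w | S.Collinear q w} ⊆ ⋃ l ∈ S.thru q, (l : Set P) := by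
    intro w hw
    exact Set.mem_biUnion (show S.lin q w ∈ S.thru q from ⟨lin_mem hw, mem_lin_left hw⟩)
      (mem_lin_right hw)
  exact Set.Finite.subset (Set.Finite.biUnion (thru_finite hGQ q)
    (fun l _ => l.finite_toSet)) hsub

lemma P_finite (hGQ : S.IsGQ t) : Finite P := by
  obtain ⟨y0⟩ := S.nonempty_pts
  have hcover : (Set.univ : Set P) ⊆ ({y0} : Set P) ∪ {w | S.Collinear y0 w} ∪
      ⋃ u ∈ {w | S.Collinear y0 w}, {w | S.Collinear u w} := by
    intro p _
    by_cases h1 : p = y0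
    · exact Or.inl (Or.inl h1)
    by_cases h2 : S.Collinear y0 p
    · exact Or.inl (Or.inr h2)
    · obtain ⟨u, hu1, hu2⟩ := common_neighbor hGQ (Ne.symm h1) h2
      exact Or.inr (Set.mem_biUnion hu1 (col_symm hu2))
  have hfin : (Set.univ : Set P).Finite := by
    refine Set.Finite.subset ?_ hcover
    refine Set.Finite.union (Set.Finite.union (Set.finite_singleton _)
      (nb_set_finite hGQ y0)) ?_
    exact Set.Finite.biUnion (nb_set_finite hGQ y0) (fun u _ => nb_set_finite hGQ u)
  exact Set.finite_univ_iff.mp hfin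

lemma hard_t2 (hGQ : S.IsGQ t) {x y z : P} (hh : S.Hard x y z) : 2 ≤ t := by
  classical
  obtain ⟨u, hu⟩ := perp_nonempty hGQ hh.2.2.1.2 hh.2.2.1.1
  have hxu : S.Collinear x u := hh.2.2.2 u hu.1 hu.2
  have hux : S.Collinear u x := col_symm hxu
  have huy : S.Collinear u y := col_symm hu.1
  have huz : S.Collinear u z := col_symm hu.2
  have hxy : S.lin u x ≠ S.lin u y := by
    intro h
    exact hh.1.1 (line_col (lin_mem hux) (mem_lin_right hux)
      (h ▸ mem_lin_right huy) hh.1.2)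
  have hxz : S.lin u x ≠ S.lin u z := by
    intro h
    exact hh.2.1.1 (line_col (lin_mem hux) (mem_lin_right hux)
      (h ▸ mem_lin_right huz) hh.2.1.2)
  have hyz : S.lin u y ≠ S.lin u z := by
    intro h
    exact hh.2.2.1.1 (line_col (lin_mem huy) (mem_lin_right huy)
      (h ▸ mem_lin_right huz) hh.2.2.1.2)
  have hsub : ({S.lin u x, S.lin u y, S.lin u z} : Set (Finset P)) ⊆ S.thru u := by
    rintro l (rfl | rfl | rfl)
    exacts [⟨lin_mem hux, mem_lin_left hux⟩, ⟨lin_mem huy, mem_lin_left huy⟩,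
      ⟨lin_mem huz, mem_lin_left huz⟩]
  have h3 : ({S.lin u x, S.lin u y, S.lin u z} : Set (Finset P)).ncard = 3 := by
    rw [Set.ncard_insert_of_notMem (by simp [hxy, hxz]),
      Set.ncard_insert_of_notMem (by simp [hyz]), Set.ncard_singleton]
  have hle := Set.ncard_le_ncard hsub (thru_finite hGQ u)
  rw [h3, thru_ncard hGQ] at hle
  omega

/-- the perp-condition transfers: common neighbours of x,y are neighbours of z -/
lemma hard_perp_eq (hGQ : S.IsGQ t) {x y z : P} (hh : S.Hard x y z) :
    ∀ u, S.Collinear x u → S.Collinear y u → S.Collinear z u := by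
  have hsub : S.perp y z ⊆ S.perp x y := by
    rintro u ⟨h1, h2⟩
    exact ⟨hh.2.2.2 u h1 h2, h1⟩
  have heq : S.perp y z = S.perp x y :=
    Set.eq_of_subset_of_ncard_le hsub
      (by rw [perp_ncard hGQ hh.2.2.1.2 hh.2.2.1.1, perp_ncard hGQ hh.1.2 hh.1.1])
      (perp_finite hGQ hh.1.2 hh.1.1)
  intro u h1 h2
  have hu : u ∈ S.perp y z := by rw [heq]; exact ⟨h1, h2⟩
  exact hu.2

lemma hard_perp_eq' (hGQ : S.IsGQ t) {x y z : P} (hh : S.Hard x y z) :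
    ∀ u, S.Collinear x u → S.Collinear z u → S.Collinear y u := by
  have hsub : S.perp y z ⊆ S.perp x z := by
    rintro u ⟨h1, h2⟩
    exact ⟨hh.2.2.2 u h1 h2, h2⟩
  have heq : S.perp y z = S.perp x z :=
    Set.eq_of_subset_of_ncard_le hsub
      (by rw [perp_ncard hGQ hh.2.2.1.2 hh.2.2.1.1, perp_ncard hGQ hh.2.1.2 hh.2.1.1])
      (perp_finite hGQ hh.2.1.2 hh.2.1.1)
  intro u h1 h2
  have hu : u ∈ S.perp y z := by rw [heq]; exact ⟨h1, h2⟩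
  exact hu.1

lemma hard_swap {x y z : P} (hh : S.Hard x y z) : S.Hard x z y :=
  ⟨hh.2.1, hh.1, ⟨fun hc => hh.2.2.1.1 (col_symm hc), Ne.symm hh.2.2.1.2⟩,
    fun u h1 h2 => hh.2.2.2 u h2 h1⟩

lemma hard_rotate (hGQ : S.IsGQ t) {x y z : P} (hh : S.Hard x y z) : S.Hard y z x := by
  refine ⟨hh.2.2.1, ⟨fun hc => hh.1.1 (col_symm hc), Ne.symm hh.1.2⟩,
    ⟨fun hc => hh.2.1.1 (col_symm hc), Ne.symm hh.2.1.2⟩, ?_⟩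
  intro u h1 h2
  exact hard_perp_eq' hGQ hh u h2 h1

/-- x collinear with u but not with z implies x not collinear with the third point of uz -/
lemma col_only (hGQ : S.IsGQ t) {x u z : P} (huz : S.Collinear u z) (hxu : S.Collinear x u)
    (hxz : ¬ S.Collinear x z) (hxzne : x ≠ z) :
    ¬ S.Collinear x (S.trd u z) ∧ x ≠ S.trd u z := by
  have hxl : x ∉ S.lin u z := by
    intro hx
    rcases mem_lin_cases huz hx with h | h | h
    · exact (col_ne hxu) h
    · exact hxzne h
    · exact hxz (col_symm (by rw [h]; exact col_trd_right huz))
  constructor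
  · intro hcol
    obtain ⟨w, _, hwu⟩ := ax4 hGQ (lin_mem huz) hxl
    have h1 := hwu u ⟨mem_lin_left huz, hxu⟩
    have h2 := hwu (S.trd u z) ⟨trd_mem_lin huz, hcol⟩
    exact (trd_ne_left huz) (h2.trans h1.symm)
  · intro h
    exact hxl (h ▸ trd_mem_lin huz)

end SlimPLS

namespace SlimPLS

variable {P : Type*} [Fintype P] {S : SlimPLS P} {t : ℕ} {R : Type*} [Group R] {ρ : S.Rep R}

/-- Good triples: hard triples whose representation value is the fixed element h -/
def Goodt (S : SlimPLS P) (ρ : S.Rep R) (h : R) (x y z : P) : Prop :=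
  S.Hard x y z ∧ ρ.r x * (ρ.r y * ρ.r z) = h

lemma good_move (hGQ : S.IsGQ t) {h : R} (hhT : h ∉ TT S ρ) {x y z y' : P}
    (hg : Goodt S ρ h x y z) (hyy' : S.Collinear y y') (hxy' : ¬ S.Collinear x y') :
    ∃ z', Goodt S ρ h x y' z' ∧ S.Collinear z z' := by
  obtain ⟨hh, hv⟩ := hg
  have hxy'ne : x ≠ y' := by rintro rfl; exact hh.1.1 (col_symm hyy')
  have hyu : S.Collinear y (S.trd y y') := col_trd_left hyy'
  have hy'eq : S.trd y (S.trd y y') = y' := trd_trd hyy'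
  have hxu : S.Collinear x (S.trd y y') := by
    refine perp_forcing hGQ hh.1.1 hh.1.2 hyu ⟨?_, ?_⟩ <;> rw [hy'eq]
    · exact hxy'ne
    · exact hxy'
  have hzu : S.Collinear z (S.trd y y') := hard_perp_eq hGQ hh _ hxu hyu
  have huz : S.Collinear (S.trd y y') z := col_symm hzu
  have hsw : ρ.r y * ρ.r z = ρ.r y' * ρ.r (S.trd (S.trd y y') z) := by
    have := switch ρ hyu huz
    rwa [hy'eq] at this
  have hv' : ρ.r x * (ρ.r y' * ρ.r (S.trd (S.trd y y') z)) = h := by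
    rw [← hsw]; exact hv
  have hy'z' : ¬ S.Collinear y' (S.trd (S.trd y y') z) ∧ y' ≠ S.trd (S.trd y y') z := by
    have := trd_trd_noncol hGQ hyu huz
      (fun hc => hh.2.2.1.1 (col_symm hc)) (Ne.symm hh.2.2.1.2)
    rwa [hy'eq] at this
  rcases key3 hGQ ρ hy'z'.2 hy'z'.1 hxy'ne hxy' with hT | hHard
  · rw [hv'] at hT
    exact absurd hT hhT
  · exact ⟨_, ⟨hHard, hv'⟩, col_trd_right huz⟩

lemma rot2 (hGQ : S.IsGQ t) {x y z : P} (hh : S.Hard x y z) : S.Hard z x y :=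
  hard_rotate hGQ (hard_rotate hGQ hh)

lemma good_reach (hGQ : S.IsGQ t) {h : R} (hhT : h ∉ TT S ρ) {x y z y'' : P}
    (hg : Goodt S ρ h x y z) (hxy'' : ¬ S.Collinear x y'') (hxy''ne : x ≠ y'') :
    ∃ z'', Goodt S ρ h x y'' z'' := by
  obtain ⟨hh, hv⟩ := hg
  have ht2 := hard_t2 hGQ hh
  by_cases hyy : y'' = y
  · exact hyy ▸ ⟨z, hh, hv⟩
  by_cases hcyy : S.Collinear y y''
  · obtain ⟨z', hg', _⟩ := good_move hGQ hhT ⟨hh, hv⟩ hcyy hxy''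
    exact ⟨z', hg'⟩
  by_cases hw : ∃ w, S.Collinear y w ∧ S.Collinear y'' w ∧ ¬ S.Collinear x w
  · obtain ⟨w, h1, h2, h3⟩ := hw
    have hxw : x ≠ w := by rintro rfl; exact hh.1.1 (col_symm h1)
    obtain ⟨z1, hg1, _⟩ := good_move hGQ hhT ⟨hh, hv⟩ h1 h3
    obtain ⟨z2, hg2, _⟩ := good_move hGQ hhT hg1 (col_symm h2) hxy''
    exact ⟨z2, hg2⟩
  · push_neg at hw
    have hhyy : S.Hard x y y'' :=
      ⟨hh.1, ⟨hxy'', hxy''ne⟩, ⟨hcyy, Ne.symm hyy⟩, hw⟩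
    have hz'' : y'' = z :=
      unique_hard hGQ hh.1.2 hh.1.1 ht2 (rot2 hGQ hhyy) (rot2 hGQ hh)
    subst hz''
    -- swap routine: reach the partner itself
    obtain ⟨u, hu⟩ := perp_nonempty hGQ hh.2.2.1.2 hh.2.2.1.1
    have hxu : S.Collinear x u := hh.2.2.2 u hu.1 hu.2
    have hyu : S.Collinear y u := hu.1
    have huy : S.Collinear u y := col_symm hyu
    have hxy1 : ¬ S.Collinear x (S.trd y u) ∧ x ≠ S.trd y u := by
      have := col_only hGQ huy hxu hh.1.1 hh.1.2
      rwa [trd_comm hyu] at this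
  -- note : trd_comm (h : col y u) : S.trd u y = S.trd y u
    obtain ⟨z1, hg1, hcz1⟩ := good_move hGQ hhT ⟨hh, hv⟩ (col_trd_left hyu) hxy1.1
    have huy1 : S.Collinear u (S.trd y u) := col_trd_right hyu
    have huz : S.Collinear u y'' := col_symm hu.2
    have hlin : S.lin y u = S.lin u (S.trd y u) :=
      eq_lin huy1 (lin_mem hyu) (mem_lin_right hyu) (trd_mem_lin hyu)
    have hznl : y'' ∉ S.lin u (S.trd y u) := by
      rw [← hlin]
      intro hz
      rcases mem_lin_cases hyu hz with hcase | hcase | hcase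
      · exact hh.2.2.1.2 hcase.symm
      · exact (col_ne hu.2) hcase
      · exact hh.2.2.1.1 (hcase ▸ col_trd_left hyu)
    have hy1z : ¬ S.Collinear (S.trd y u) y'' ∧ S.trd y u ≠ y'' :=
      noncol_of_two_lines hGQ huy1 huz hznl
    by_cases hw2 : ∃ w, S.Collinear (S.trd y u) w ∧ S.Collinear y'' w ∧ ¬ S.Collinear x w
    · obtain ⟨w, h1, h2, h3⟩ := hw2
      obtain ⟨z2, hg2, _⟩ := good_move hGQ hhT hg1 h1 h3
      obtain ⟨z3, hg3, _⟩ := good_move hGQ hhT hg2 (col_symm h2) hh.2.1.1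
      exact ⟨z3, hg3⟩
    · push_neg at hw2
      exfalso
      have hhard2 : S.Hard x (S.trd y u) y'' :=
        ⟨⟨hxy1.1, hxy1.2⟩, hh.2.1, ⟨hy1z.1, hy1z.2⟩, hw2⟩
      have heq : y'' = z1 :=
        unique_hard hGQ hxy1.2 hxy1.1 ht2 (rot2 hGQ hhard2) (rot2 hGQ hg1.1)
      exact (col_ne hcz1) heq

lemma good_base (hGQ : S.IsGQ t) {h : R} (hhT : h ∉ TT S ρ) {x x' y z : P}
    (hg : Goodt S ρ h x y z) (hxx' : S.Collinear x x') :
    ∃ y' z', Goodt S ρ h x' y' z' := by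
  classical
  obtain ⟨hh, hv⟩ := hg
  have ht2 := hard_t2 hGQ hh
  have hxu : S.Collinear x (S.trd x x') := col_trd_left hxx'
  have hux : S.Collinear (S.trd x x') x := col_symm hxu
  -- find a line m through u other than lin u x
  have h1lt : 1 < (S.thru (S.trd x x')).ncard := by
    rw [thru_ncard hGQ]; omega
  obtain ⟨m, hm, hmne⟩ := Set.exists_ne_of_one_lt_ncard h1lt (S.lin (S.trd x x') x)
  obtain ⟨hml, hum⟩ := hm
  have hxm : x ∉ m := by
    intro hx
    exact hmne (eq_lin hux hml hum hx)
  -- pick y1 on m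
  have : (m.erase (S.trd x x')).Nonempty := by
    rw [← Finset.card_pos, erase_card hml hum]; omega
  obtain ⟨y1, hy1⟩ := this
  have hy1m : y1 ∈ m := Finset.mem_of_mem_erase hy1
  have hy1u : y1 ≠ S.trd x x' := (Finset.mem_erase.1 hy1).1
  have huy1 : S.Collinear (S.trd x x') y1 := line_col hml hum hy1m (Ne.symm hy1u)
  have hxy1 : ¬ S.Collinear x y1 ∧ x ≠ y1 := by
    constructor
    · intro hc
      have hx3 : x = S.trd (S.trd x x') y1 := no_triangle hGQ huy1 hxu hc
      have h4 : S.trd (S.trd x x') y1 ∈ m := by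
        rw [eq_lin huy1 hml hum hy1m]; exact trd_mem_lin huy1
      rw [← hx3] at h4
      exact hxm h4
    · rintro rfl; exact hxm hy1m
  obtain ⟨z1, hh1, hv1⟩ := good_reach hGQ hhT ⟨hh, hv⟩ hxy1.1 hxy1.2
  have huz1 : S.Collinear z1 (S.trd x x') := hard_perp_eq hGQ hh1 _ hxu (col_symm huy1)
  have hsw : ρ.r x * ρ.r y1 = ρ.r x' * ρ.r (S.trd (S.trd x x') y1) := by
    have := switch ρ hxu huy1
    rwa [trd_trd hxx'] at this
  have hv2 : ρ.r x' * (ρ.r (S.trd (S.trd x x') y1) * ρ.r z1) = h := by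
    rw [← hv1, ← mul_assoc, ← mul_assoc, hsw]
  -- non-collinearity facts for the new triple
  have hx'y2 : ¬ S.Collinear x' (S.trd (S.trd x x') y1) ∧ x' ≠ S.trd (S.trd x x') y1 := by
    have := trd_trd_noncol hGQ hxu huy1 (fun hc => hh1.1.1 (col_symm hc)) (Ne.symm hh1.1.2)
    rwa [trd_trd hxx'] at this
  have hux' : S.Collinear (S.trd x x') x' := by
    refine line_col (lin_mem hxx') (trd_mem_lin hxx') (mem_lin_right hxx') ?_
    exact trd_ne_right hxx'
  have hlinx : S.lin x x' = S.lin (S.trd x x') x' :=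
    eq_lin hux' (lin_mem hxx') (trd_mem_lin hxx') (mem_lin_right hxx')
  have hz1nl : z1 ∉ S.lin (S.trd x x') x' := by
    rw [← hlinx]
    intro hz
    rcases mem_lin_cases hxx' hz with hcase | hcase | hcase
    · exact hh1.2.1.2 hcase.symm
    · exact hh1.2.1.1 (hcase ▸ hxx')
    · exact (col_ne huz1) hcase
  have hx'z1 : ¬ S.Collinear x' z1 ∧ x' ≠ z1 :=
    noncol_of_two_lines hGQ hux' (col_symm huz1) hz1nl
  have hy2u : S.Collinear (S.trd x x') (S.trd (S.trd x x') y1) := col_trd_left huy1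
  have hz1nl2 : z1 ∉ S.lin (S.trd x x') (S.trd (S.trd x x') y1) := by
    rw [lin_trd_left huy1]
    intro hz
    rcases mem_lin_cases huy1 hz with hcase | hcase | hcase
    · exact (col_ne huz1) hcase
    · exact hh1.2.2.1.2 hcase.symm
    · exact hh1.2.2.1.1 (hcase ▸ col_trd_right huy1)
  have hy2z1 : ¬ S.Collinear (S.trd (S.trd x x') y1) z1 ∧ S.trd (S.trd x x') y1 ≠ z1 :=
    noncol_of_two_lines hGQ hy2u (col_symm huz1) hz1nl2
  rcases key3 hGQ ρ hy2z1.2 hy2z1.1 hx'y2.2 hx'y2.1 with hT | hHard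
  · rw [hv2] at hT
    exact absurd hT hhT
  · exact ⟨_, z1, hHard, hv2⟩

lemma good_all (hGQ : S.IsGQ t) {h : R} (hhT : h ∉ TT S ρ) {x0 y0 z0 : P}
    (hg0 : Goodt S ρ h x0 y0 z0) : ∀ p : P, ∃ y z, Goodt S ρ h p y z := by
  intro p
  have hreach : S.graph.Reachable x0 p := (hGQ.1).preconnected x0 p
  obtain ⟨w⟩ := hreach
  have main : ∀ {a b : P} (_ : S.graph.Walk a b), (∃ y z, Goodt S ρ h a y z) →
      ∃ y z, Goodt S ρ h b y z := by
    intro a b w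
    induction w with
    | nil => exact id
    | cons hadj w' ih =>
      intro ⟨y, z, hg⟩
      exact ih (good_base hGQ hhT hg hadj)
  exact main w ⟨y0, z0, hg0⟩

end SlimPLS

namespace SlimPLS

variable {P : Type*} [Fintype P] {S : SlimPLS P} {t : ℕ} {R : Type*} [Group R] {ρ : S.Rep R}

lemma h_comm (hGQ : S.IsGQ t) {h : R} (hhT : h ∉ TT S ρ)
    (hall : ∀ p : P, ∃ y z, Goodt S ρ h p y z) (p : P) : ρ.r p * h = h * ρ.r p := by
  obtain ⟨q, hqp, hnc⟩ := hGQ.2.1 p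
  obtain ⟨a, b, hgab⟩ := hall p
  obtain ⟨w1, hg1⟩ := good_reach hGQ hhT hgab hnc (Ne.symm hqp)
  have ht2 := hard_t2 hGQ hg1.1
  obtain ⟨c, d, hgcd⟩ := hall q
  have hqw1 : ¬ S.Collinear q w1 := hg1.1.2.2.1.1
  have hqw1ne : q ≠ w1 := hg1.1.2.2.1.2
  obtain ⟨w2, hg2⟩ := good_reach hGQ hhT hgcd hqw1 hqw1ne
  have hw2p : w2 = p :=
    unique_hard hGQ hqw1ne hqw1 ht2 (rot2 hGQ hg2.1) hg1.1
  rw [hw2p] at hg2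
  have hv1 := hg1.2
  have hv2 := hg2.2
  have e1 : ρ.r p * h = ρ.r q * ρ.r w1 := by
    rw [← hv1, ← mul_assoc, rr_sq, one_mul]
  have e2 : h * ρ.r p = ρ.r q * ρ.r w1 := by
    rw [← hv2, mul_assoc, mul_assoc, rr_sq, mul_one]
  rw [e1, e2]

lemma h_sq (hGQ : S.IsGQ t) {h : R} (hhT : h ∉ TT S ρ)
    (hall : ∀ p : P, ∃ y z, Goodt S ρ h p y z) : h * h = 1 := by
  haveI := S.nonempty_pts
  obtain ⟨p⟩ := S.nonempty_pts
  obtain ⟨q, w, hg⟩ := hall p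
  have hh := hg.1
  have ht2 := hard_t2 hGQ hh
  obtain ⟨c, d, hgcd⟩ := hall w
  have hwq : ¬ S.Collinear w q := fun hc => hh.2.2.1.1 (col_symm hc)
  have hwqne : w ≠ q := Ne.symm hh.2.2.1.2
  obtain ⟨w2, hg2⟩ := good_reach hGQ hhT hgcd hwq hwqne
  have hw2p : w2 = p :=
    unique_hard hGQ hwqne hwq ht2 (rot2 hGQ hg2.1) (hard_swap hh)
  rw [hw2p] at hg2
  have hv1 := hg.2
  have hv2 := hg2.2
  have key : (ρ.r p * (ρ.r q * ρ.r w)) * (ρ.r w * (ρ.r q * ρ.r p)) = 1 := by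
    simp only [mul_assoc]
    rw [← mul_assoc (ρ.r w) (ρ.r w), rr_sq, one_mul,
      ← mul_assoc (ρ.r q) (ρ.r q), rr_sq, one_mul, rr_sq]
  calc h * h = (ρ.r p * (ρ.r q * ρ.r w)) * (ρ.r w * (ρ.r q * ρ.r p)) := by rw [hv1, hv2]
    _ = 1 := key

lemma hDh (hGQ : S.IsGQ t) {h : R} (hhT : h ∉ TT S ρ)
    (hall : ∀ p : P, ∃ y z, Goodt S ρ h p y z) {p q : P}
    (hnc : ¬ S.Collinear p q) (hne : p ≠ q) : ∃ w, ρ.r p * ρ.r q = h * ρ.r w := by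
  obtain ⟨a, b, hg⟩ := hall p
  obtain ⟨w, hg1⟩ := good_reach hGQ hhT hg hnc hne
  refine ⟨w, ?_⟩
  rw [← hg1.2, mul_assoc, mul_assoc, rr_sq, mul_one]

/-- the 32-element set in the exceptional case -/
lemma final_R (hGQ : S.IsGQ t) (ρ : S.Rep R) (hf : Function.Injective ρ.r)
    {h : R} (hhT : h ∉ TT S ρ)
    {x0 y0 z0 : P} (hg0 : Goodt S ρ h x0 y0 z0) :
    t = 2 ∧ Nat.card R = 2 ^ 5 := by
  classical
  have hall := good_all hGQ hhT hg0
  have hβ := h_comm hGQ hhT hall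
  have hγ := h_sq hGQ hhT hall
  have ht2 := hard_t2 hGQ hg0.1
  have ht4 : t ≤ 4 := higman hGQ hg0.1.2.2.1.2 hg0.1.2.2.1.1
  have hinv : h⁻¹ = h := inv_eq_of_mul_eq_one_right hγ
  -- the set U
  set U : Set R := ({1, h} : Set R) ∪ Set.range ρ.r ∪ (fun p => h * ρ.r p) '' Set.univ
    with hU
  have h1U : (1 : R) ∈ U := Or.inl (Or.inl (Or.inl rfl))
  have hhU : h ∈ U := Or.inl (Or.inl (Or.inr rfl))
  have hrU : ∀ p, ρ.r p ∈ U := fun p => Or.inl (Or.inr ⟨p, rfl⟩)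
  have hhrU : ∀ p, h * ρ.r p ∈ U := fun p => Or.inr ⟨p, Set.mem_univ p, rfl⟩
  -- closure of U under left multiplication by generators
  have hmul : ∀ p : P, ∀ s ∈ U, ρ.r p * s ∈ U := by
    intro p s hs
    have key2 : ∀ q : P, ρ.r p * ρ.r q ∈ U := by
      intro q
      by_cases hpq : p = q
      · subst hpq; rw [rr_sq]; exact h1U
      by_cases hc : S.Collinear p q
      · rw [rep_line ρ hc]; exact hrU _
      · obtain ⟨w, hw⟩ := hDh hGQ hhT hall hc hpq
        rw [hw]; exact hhrU w
    rcases hs with ((rfl | rfl) | ⟨q, rfl⟩) | ⟨q, -, rfl⟩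
    · rw [mul_one]; exact hrU p
    · rw [hβ p]; exact hhrU p
    · exact key2 q
    · rw [← mul_assoc, hβ p, mul_assoc]
      rcases key2 q with ((h1 | h2) | ⟨w, hw⟩) | ⟨w, -, hw⟩
      · rw [h1, mul_one]; exact hhU
      · rw [h2, hγ]; exact h1U
      · rw [← hw]; exact hhrU w
      · rw [← hw, ← mul_assoc, hγ, one_mul]; exact hrU w
  -- U is closed under inverses
  have hinvU : ∀ s ∈ U, s⁻¹ ∈ U := by
    rintro s (((rfl | rfl) | ⟨q, rfl⟩) | ⟨q, -, rfl⟩)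
    · rw [inv_one]; exact h1U
    · rw [hinv]; exact hhU
    · rw [rr_inv]; exact hrU q
    · rw [mul_inv_rev, rr_inv, hinv, hβ q]; exact hhrU q
  -- all of R is in U
  have hallU : ∀ g : R, g ∈ U := by
    intro g
    have hg : g ∈ Subgroup.closure (Set.range ρ.r) := by rw [ρ.gen]; trivial
    have main : (∀ s ∈ U, g * s ∈ U) ∧ (∀ s ∈ U, g⁻¹ * s ∈ U) := by
      induction hg using Subgroup.closure_induction with
      | mem a ha =>
        obtain ⟨p, rfl⟩ := ha
        exact ⟨fun s hs => hmul p s hs, fun s hs => by rw [rr_inv]; exact hmul p s hs⟩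
      | one => constructor <;> (intro s hs; simpa using hs)
      | mul a b _ _ ha hb =>
        refine ⟨fun s hs => ?_, fun s hs => ?_⟩
        · rw [mul_assoc]; exact ha.1 _ (hb.1 s hs)
        · rw [mul_inv_rev, mul_assoc]; exact hb.2 _ (ha.2 s hs)
      | inv a _ ha =>
        refine ⟨fun s hs => ha.2 s hs, fun s hs => ?_⟩
        rw [inv_inv]; exact ha.1 s hs
    have := main.1 1 h1U
    rwa [mul_one] at this
  -- cardinality count
  have hone_ne_h : (1 : R) ≠ h := fun he => hhT (he ▸ one_mem_TT)
  have hh_nr : ∀ p, h ≠ ρ.r p := fun p he => hhT (he ▸ range_mem_TT p)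
  have hone_nr : ∀ p, (1 : R) ≠ ρ.r p := fun p he => rr_ne_one ρ p he.symm
  have hone_nhr : ∀ p, (1 : R) ≠ h * ρ.r p := by
    intro p he
    have : h = (ρ.r p)⁻¹ := mul_eq_one_iff_eq_inv.mp he.symm
    rw [rr_inv] at this
    exact hh_nr p this
  have hh_nhr : ∀ p, h ≠ h * ρ.r p := by
    intro p he
    have := mul_left_cancel (a := h) (by rw [mul_one]; exact he : h * 1 = h * ρ.r p)
    exact rr_ne_one ρ p this.symm
  have hr_nhr : ∀ p q, ρ.r p ≠ h * ρ.r q := by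
    intro p q he
    have : h = ρ.r p * ρ.r q := by
      rw [he, mul_assoc, rr_sq, mul_one]
    exact hhT (this ▸ two_gen_TT p q)
  -- as a finset
  set UF : Finset R := ({1, h} : Finset R) ∪ Finset.image ρ.r Finset.univ ∪
    Finset.image (fun p => h * ρ.r p) Finset.univ with hUF
  have hUFU : ∀ g : R, g ∈ UF := by
    intro g
    have := hallU g
    rcases this with ((rfl | rfl) | ⟨q, rfl⟩) | ⟨q, -, rfl⟩
    · simp [hUF]
    · simp [hUF]
    · simp only [hUF, Finset.mem_union]
      exact Or.inl (Or.inr (Finset.mem_image.2 ⟨q, Finset.mem_univ q, rfl⟩))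
    · simp only [hUF, Finset.mem_union]
      exact Or.inr (Finset.mem_image.2 ⟨q, Finset.mem_univ q, rfl⟩)
  have hcardUF : UF.card = 2 * Fintype.card P + 2 := by
    rw [hUF]
    rw [Finset.card_union_of_disjoint, Finset.card_union_of_disjoint]
    · rw [Finset.card_image_of_injective _ hf,
        Finset.card_image_of_injective _ (fun a b hab => hf (mul_left_cancel hab)),
        Finset.card_univ]
      rw [Finset.card_pair hone_ne_h]
      ring
    · rw [Finset.disjoint_left]
      rintro g hg1 hg2
      obtain ⟨p, _, rfl⟩ := Finset.mem_image.1 hg2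
      rcases Finset.mem_insert.1 hg1 with he | he
      · exact hone_nr p he.symm
      · exact hh_nr p (Finset.mem_singleton.1 he).symm
    · rw [Finset.disjoint_left]
      rintro g hg1 hg2
      obtain ⟨q, _, rfl⟩ := Finset.mem_image.1 hg2
      rcases Finset.mem_union.1 hg1 with hg1 | hg1
      · rcases Finset.mem_insert.1 hg1 with he | he
        · exact hone_nhr q he.symm
        · exact hh_nhr q (Finset.mem_singleton.1 he).symm
      · obtain ⟨p, -, hp⟩ := Finset.mem_image.1 hg1
        exact hr_nhr p q hp
  -- R is finite with the right cardinality
  haveI : Fintype R := ⟨UF, hUFU⟩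
  have huniv : (Finset.univ : Finset R) = UF := (Finset.eq_univ_iff_forall.mpr hUFU).symm
  have hcardR : Fintype.card R = 2 * Fintype.card P + 2 := by
    rw [← hcardUF, ← Finset.card_univ, huniv]
  have hsq : ∀ g : R, g * g = 1 := by
    intro g
    rcases hallU g with ((rfl | rfl) | ⟨q, rfl⟩) | ⟨q, -, rfl⟩
    · rw [mul_one]
    · exact hγ
    · exact rr_sq ρ q
    · rw [mul_assoc, ← mul_assoc (ρ.r q), hβ q, mul_assoc, rr_sq, mul_one, hγ]
  have hPcard := card_P hGQ
  have hord : ∀ (pp : ℕ), Nat.Prime pp → pp ∣ Fintype.card R → pp ∣ 2 := by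
    intro pp hpp hdvd
    haveI : Fact (Nat.Prime pp) := ⟨hpp⟩
    obtain ⟨x, hx⟩ := exists_prime_orderOf_dvd_card pp hdvd
    have hdd : orderOf x ∣ 2 := orderOf_dvd_of_pow_eq_one (by rw [pow_two]; exact hsq x)
    rwa [hx] at hdd
  interval_cases t
  · refine ⟨rfl, ?_⟩
    rw [Nat.card_eq_fintype_card, hcardR, hPcard]
    norm_num
  · exfalso
    have h11 : (11 : ℕ) ∣ Fintype.card R := by rw [hcardR, hPcard]; norm_num
    have := hord 11 (by norm_num) h11
    omega
  · exfalso
    have h7 : (7 : ℕ) ∣ Fintype.card R := by rw [hcardR, hPcard]; norm_num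
    have := hord 7 (by norm_num) h7
    omega

end SlimPLS

/-- For a faithful representation of a `(2,t)`-GQ with
`(t, |R|) ≠ (2, 2^5)`, every element of `R` other than the identity and the
elements of `R_ψ` is of the form `r_y r_z` for non-collinear points `y, z`. -/
theorem gq_rep_expression {P : Type*} (S : SlimPLS P) {t : ℕ}
    (hGQ : S.IsGQ t) {R : Type*} [Group R] (ρ : S.Rep R)
    (hf : Function.Injective ρ.r)
    (hne : ¬ (t = 2 ∧ Nat.card R = 2 ^ 5))
    (g : R) (hg1 : g ≠ 1) (hgψ : g ∉ Set.range ρ.r) :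
    ∃ y z : P, y ≠ z ∧ ¬ S.Collinear y z ∧ g = ρ.r y * ρ.r z := by
  classical
  by_cases hHard : ∀ x y z : P, S.Hard x y z → ρ.r x * (ρ.r y * ρ.r z) ∈ SlimPLS.TT S ρ
  · have hg := SlimPLS.all_TT hGQ ρ hHard g
    rcases hg with (hg1' | ⟨p, rfl⟩) | ⟨y, z, hne', hnc', rfl⟩
    · exact absurd hg1' hg1
    · exact absurd ⟨p, rfl⟩ hgψ
    · exact ⟨y, z, hne', hnc', rfl⟩
  · push_neg at hHard
    obtain ⟨x0, y0, z0, hh0, hT0⟩ := hHard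
    haveI : Finite P := SlimPLS.P_finite hGQ
    haveI : Fintype P := Fintype.ofFinite P
    exact absurd (SlimPLS.final_R hGQ ρ hf hT0 ⟨hh0, rfl⟩) hne
end

section
/- Let R be a finite non-abelian 2-group such that the commutator subgroup [R,R] has order 2, [R,R] is contained in the center Z(R), and x^2 ∈ [R,R] for every x ∈ R. Then there exists an extraspecial subgroup E of R such that R = E·Z(R), i.e., every element of R is the product of an element of E and an element of Z(R). -/
open scoped Classical

/-!
All squares of `R` lie in `C = [R,R]`, so every element outside `C` is avoided by a subgroup of
index `2` containing `C`; hence `Φ(R) ≤ C`. Conversely a central commutator lies in every maximal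
subgroup `M`, for otherwise `M·Z(R) = R` and `[R,R] = [M,M] ≤ M`. Now take `E` minimal with
`E·Z(R) = R`. Then `[E,E] = [R,R] = C`, and an element `z ∈ Z(E)` outside `C` would be central in
`R`, so an index-`2` subgroup of `E` avoiding `z` would still supplement `Z(R)`, against
minimality. Hence `Z(E) = [E,E] = C`, and the two Frattini bounds inside `E` make it extraspecial.
-/

open scoped commutatorElement

section

variable {G : Type*} [Group G]

lemma commutatorElement_mul_mem_center {z w : G} (hz : z ∈ Subgroup.center G)
    (hw : w ∈ Subgroup.center G) (a b : G) : ⁅a * z, b * w⁆ = ⁅a, b⁆ := by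
  have hz' (g : G) : ⁅z, g⁆ = 1 :=
    commutatorElement_eq_one_iff_mul_comm.2 (Subgroup.mem_center_iff.1 hz g).symm
  have hw' (g : G) : ⁅g, w⁆ = 1 :=
    commutatorElement_eq_one_iff_mul_comm.2 (Subgroup.mem_center_iff.1 hw g)
  simp [commutatorElement_mul_left_eq_conj_mul, commutatorElement_mul_right_eq_mul_conj, hz', hw']

namespace Subgroup

lemma commutator_eq_of_sup_center_eq_top {E : Subgroup G} (hE : E ⊔ center G = ⊤) :
    ⁅E, E⁆ = _root_.commutator G := by
  refine le_antisymm (commutator_mono le_top le_top) ?_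
  rw [_root_.commutator_def, commutator_le]
  intro x _ y _
  obtain ⟨a, ha, z, hz, rfl⟩ := mem_sup_of_normal_right.1 (hE ▸ mem_top x)
  obtain ⟨b, hb, w, hw, rfl⟩ := mem_sup_of_normal_right.1 (hE ▸ mem_top y)
  rw [commutatorElement_mul_mem_center hz hw]
  exact commutator_mem_commutator ha hb

lemma mem_center_of_sup_center_eq_top {E : Subgroup G} (hE : E ⊔ center G = ⊤) {z : E}
    (hz : z ∈ center E) : (z : G) ∈ center G := by
  refine mem_center_iff.2 fun x => ?_
  obtain ⟨e, he, w, hw, rfl⟩ := mem_sup_of_normal_right.1 (hE ▸ mem_top x)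
  have hze : e * z = z * e := congrArg Subtype.val (mem_center_iff.1 hz ⟨e, he⟩)
  rw [mul_assoc, ← mem_center_iff.1 hw, ← mul_assoc, hze, mul_assoc]

lemma normal_of_forall_sq_mem {M : Subgroup G} (hsq : ∀ x : G, x ^ 2 ∈ M) : M.Normal := by
  refine ⟨fun m hm g => ?_⟩
  have h : g * m * g⁻¹ = (g * m) ^ 2 * m⁻¹ * g⁻¹ ^ 2 := by simp only [sq]; group
  rw [h]
  exact M.mul_mem (M.mul_mem (hsq _) (M.inv_mem hm)) (hsq _)

lemma exists_mem_iff_mem_or_mul_inv_mem {M : Subgroup G} (hsq : ∀ x : G, x ^ 2 ∈ M) (x : G) :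
    ∃ K : Subgroup G, ∀ y, y ∈ K ↔ y ∈ M ∨ y * x⁻¹ ∈ M := by
  have hM := normal_of_forall_sq_mem hsq
  refine ⟨{ carrier := {y | y ∈ M ∨ y * x⁻¹ ∈ M}
            one_mem' := Or.inl M.one_mem
            mul_mem' := ?_
            inv_mem' := ?_ }, fun y => Iff.rfl⟩
  · rintro p q (hp | hp) (hq | hq)
    · exact Or.inl (M.mul_mem hp hq)
    · refine Or.inr ?_
      rw [mul_assoc]
      exact M.mul_mem hp hq
    · refine Or.inr ?_
      have h : p * q * x⁻¹ = p * x⁻¹ * (x * q * x⁻¹) := by group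
      rw [h]
      exact M.mul_mem hp (hM.conj_mem q hq x)
    · refine Or.inl ?_
      have h : p * q = p * x⁻¹ * (x * (q * x⁻¹) * x⁻¹) * x ^ 2 := by group
      rw [h]
      exact M.mul_mem (M.mul_mem hp (hM.conj_mem _ hq x)) (hsq x)
  · rintro p (hp | hp)
    · exact Or.inl (M.inv_mem hp)
    · refine Or.inr ?_
      have h : p⁻¹ * x⁻¹ = (x * (p * x⁻¹) * x⁻¹ * x ^ 2)⁻¹ := by group
      rw [h]
      exact M.inv_mem (M.mul_mem (hM.conj_mem _ hp x) (hsq x))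

lemma isCoatom_of_index_prime {M : Subgroup G} (hp : M.index.Prime) : IsCoatom M := by
  refine ⟨fun h => hp.ne_one (index_eq_one.2 h), fun K hMK => index_eq_one.1 ?_⟩
  have hmul := relIndex_mul_index hMK.le
  rcases hp.eq_one_or_self_of_dvd K.index (Dvd.intro_left _ hmul) with h | h
  · exact h
  · rw [h, Nat.mul_eq_right hp.ne_zero, relIndex_eq_one] at hmul
    exact absurd hmul (not_le_of_gt hMK)

lemma exists_index_eq_two_notMem [Finite G] {H : Subgroup G} (hsq : ∀ x : G, x ^ 2 ∈ H)
    {g : G} (hg : g ∉ H) : ∃ M : Subgroup G, H ≤ M ∧ M.index = 2 ∧ g ∉ M := by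
  obtain ⟨M, ⟨hHM, hgM⟩, hmax⟩ := Set.Finite.exists_maximal
    (s := {M : Subgroup G | H ≤ M ∧ g ∉ M}) (Set.toFinite _) ⟨H, le_rfl, hg⟩
  refine ⟨M, hHM, index_eq_two_iff_exists_notMem_and.2
    ⟨g⁻¹, inv_mem_iff.not.2 hgM, fun x => ?_⟩, hgM⟩
  by_cases hxM : x ∈ M
  · exact Or.inr hxM
  obtain ⟨K, hK⟩ := exists_mem_iff_mem_or_mul_inv_mem (fun y => hHM (hsq y)) x
  have hMK : M ≤ K := fun y hy => (hK y).2 (Or.inl hy)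
  -- `K` contains `H` and is strictly larger than `M`, so maximality of `M` forces `g ∈ K`.
  have hgK : g ∈ K := by
    by_contra hgK
    exact hxM (hmax ⟨hHM.trans hMK, hgK⟩ hMK ((hK x).2 (Or.inr (by simp))))
  have hgx : g * x⁻¹ ∈ M := ((hK g).1 hgK).resolve_left hgM
  exact Or.inl (by simpa using M.inv_mem hgx)

theorem map_center_le_of_minimal [Finite G] {H : Subgroup G} (hsq : ∀ x : G, x ^ 2 ∈ H)
    {E : Subgroup G} (hE : Minimal (fun K : Subgroup G => K ⊔ center G = ⊤) E) :
    (center E).map E.subtype ≤ H := by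
  rintro _ ⟨z, hz, rfl⟩
  by_contra hzH
  have hzG := mem_center_of_sup_center_eq_top hE.prop hz
  obtain ⟨M, -, hM2, hzM⟩ :=
    exists_index_eq_two_notMem (H := H.subgroupOf E) (fun x => mem_subgroupOf.2 (hsq x)) hzH
  have hEF : E ≤ M.map E.subtype ⊔ center G := by
    intro e he
    have hez : ⟨e, he⟩ * z⁻¹ ∈ M ∨ ⟨e, he⟩ ∈ M := by
      rw [mul_mem_iff_of_index_two hM2, inv_mem_iff]
      tauto
    rcases hez with hez | hez
    · simpa using mul_mem_sup (mem_map_of_mem E.subtype hez) hzG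
    · exact mem_sup_left (mem_map_of_mem E.subtype hez)
  have hFE : E ≤ M.map E.subtype :=
    hE.le_of_le (top_le_iff.1 (hE.prop ▸ sup_le hEF le_sup_right)) (map_subtype_le M)
  exact hzM ((mem_map_iff_mem E.subtype_injective).1 (hFE z.2))

end Subgroup

/-- Gaschütz. -/
theorem commutator_inf_center_le_frattini :
    commutator G ⊓ Subgroup.center G ≤ frattini G := by
  refine le_iInf₂ fun M hM => ?_
  rintro z ⟨hzC, hzZ⟩
  by_contra hzM
  have hMZ : M ⊔ Subgroup.center G = ⊤ := hM.2 _ (left_lt_sup.2 fun h => hzM (h hzZ))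
  exact hzM (M.commutator_le_self ((M.commutator_eq_of_sup_center_eq_top hMZ).symm ▸ hzC))

theorem frattini_le_of_forall_sq_mem [Finite G] {H : Subgroup G} (hsq : ∀ x : G, x ^ 2 ∈ H) :
    frattini G ≤ H := by
  intro g hg
  by_contra hgH
  obtain ⟨M, -, hM2, hgM⟩ := Subgroup.exists_index_eq_two_notMem hsq hgH
  exact hgM (frattini_le_coatom (Subgroup.isCoatom_of_index_prime (hM2 ▸ Nat.prime_two)) hg)

theorem isExtraspecial_of_commutator_eq_center [Finite G] (hp : IsPGroup 2 G)
    (hcz : commutator G = Subgroup.center G) (hsq : ∀ x : G, x ^ 2 ∈ commutator G)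
    (hcard : Nat.card (commutator G) = 2) : IsExtraspecial G := by
  have hle := commutator_inf_center_le_frattini (G := G)
  rw [← hcz, inf_idem] at hle
  exact ⟨inferInstance, hp, le_antisymm (frattini_le_of_forall_sq_mem hsq) hle, hcz,
    hcz ▸ hcard⟩

end

theorem central_product_extraspecial_general {R : Type*} [Group R] [Finite R]
    (h2 : IsPGroup 2 R)
    (hcomm : Nat.card (commutator R) = 2)
    (hcz : commutator R ≤ Subgroup.center R)
    (hsq : ∀ x : R, x ^ 2 ∈ commutator R) :
    ∃ E : Subgroup R, IsExtraspecial E ∧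
      ∀ x : R, ∃ e ∈ E, ∃ z ∈ Subgroup.center R, x = e * z := by
  obtain ⟨E, hE⟩ := Set.Finite.exists_minimal
    (s := {K : Subgroup R | K ⊔ Subgroup.center R = ⊤}) (Set.toFinite _) ⟨⊤, top_sup_eq _⟩
  have hinj := E.subtype_injective
  have hcommE : (commutator E).map E.subtype = commutator R :=
    E.map_subtype_commutator.trans (E.commutator_eq_of_sup_center_eq_top hE.prop)
  have hcommE_le : commutator E ≤ Subgroup.center E := fun x hx =>
    Subgroup.mem_center_iff.2 fun y => Subtype.ext <|
      Subgroup.mem_center_iff.1 (hcz (hcommE ▸ Subgroup.mem_map_of_mem E.subtype hx)) y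
  have hcenterE : (Subgroup.center E).map E.subtype = commutator R :=
    le_antisymm (Subgroup.map_center_le_of_minimal hsq hE) (hcommE ▸ Subgroup.map_mono hcommE_le)
  refine ⟨E, isExtraspecial_of_commutator_eq_center (h2.to_subgroup E)
    (Subgroup.map_injective hinj (hcommE.trans hcenterE.symm)) (fun x => ?_) ?_,
    fun x => ?_⟩
  · rw [← Subgroup.mem_map_iff_mem hinj, hcommE]
    exact hsq x
  · rw [← Subgroup.card_map_of_injective hinj, hcommE, hcomm]
  · obtain ⟨e, he, z, hz, rfl⟩ :=
      Subgroup.mem_sup_of_normal_right.1 (hE.prop ▸ Subgroup.mem_top x)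
    exact ⟨e, he, z, hz, rfl⟩

/-- A finite non-abelian 2-group `R` with `|[R,R]| = 2`,
`[R,R] ≤ Z(R)` and `x² ∈ [R,R]` for all `x` is a central product of an
extraspecial subgroup `E` with its center: `R = E·Z(R)`. -/
theorem central_product_extraspecial {R : Type*} [Group R] [Finite R]
    (hna : ¬ ∀ a b : R, a * b = b * a) (h2 : IsPGroup 2 R)
    (hcomm : Nat.card (commutator R) = 2)
    (hcz : commutator R ≤ Subgroup.center R)
    (hsq : ∀ x : R, x ^ 2 ∈ commutator R) :
    ∃ E : Subgroup R, IsExtraspecial E ∧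
      ∀ x : R, ∃ e ∈ E, ∃ z ∈ Subgroup.center R, x = e * z :=
  central_product_extraspecial_general h2 hcomm hcz hsq
end

section
/- Let S = (P, L) be a slim dense near hexagon and let (R, ψ) be a non-abelian representation of S. Let x ∈ P and let Y be a finite subset of Γ₃(x) = {y ∈ P : d(x,y) = 3}. Then for any enumeration y₁, …, y_k of the elements of Y, the commutator [r_x, r_{y₁} r_{y₂} ⋯ r_{y_k}] equals 1 if and only if k = |Y| is even. -/
open scoped Classical
open scoped commutatorElement

/-!
Points at distance at most 2 give commuting involutions: for distance 2, the two points and two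
common neighbours span a 3 × 3 grid of lines, in which `r_x r_y` turns out to be an involution.
Any two points of `Γ₃(x)` are joined by a path of lines inside `Γ₃(x)`, and along such a line
`{a, b, a * b}` the commutator with `r_x` cannot change, because `a * b` is at distance 2 from `x`
and `r_a r_b = r_{a * b}`.
So all `⁅r_x, r_y⁆`, `y ∈ Γ₃(x)`, equal one element `z`, and as the `r_y` are involutions the
commutator of `r_x` with a product of `k` of them is `1` or `z` according to the parity of `k`.
Finally `z ≠ 1`: otherwise `r_x` is central, centrality passes to every point opposite a central
point and along every line through a central point that has an opposite point, the points having
an opposite are linked by such steps (using density), and points without an opposite are central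
anyway, so `R` would be abelian.
-/

theorem SimpleGraph.Connected.exists_adj_dist_eq {V : Type*} {G : SimpleGraph V}
    (hG : G.Connected) {u v : V} {n : ℕ} (h : G.dist u v = n + 1) :
    ∃ w, G.Adj u w ∧ G.dist w v = n := by
  obtain ⟨p, hp⟩ := exists_walk_of_dist_ne_zero (h ▸ n.succ_ne_zero : G.dist u v ≠ 0)
  have hp' : ¬ p.Nil := fun hnil => by rw [hnil.length_eq_zero] at hp; omega
  refine ⟨p.snd, p.adj_snd hp', le_antisymm ?_ ?_⟩
  · have := dist_le p.tail
    have := p.length_tail_add_one hp'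
    omega
  · have := hG.dist_triangle (u := u) (v := p.snd) (w := v)
    rw [dist_eq_one_iff_adj.2 (p.adj_snd hp')] at this
    omega

theorem commutatorElement_list_prod {G : Type*} [Group G] {g z : G} {l : List G}
    (hl : ∀ h ∈ l, h * h = 1 ∧ ⁅g, h⁆ = z) :
    ⁅g, l.prod⁆ = if Even l.length then 1 else z := by
  induction l with
  | nil => simp
  | cons h t ih =>
    obtain ⟨⟨hh, rfl⟩, ht⟩ := List.forall_mem_cons.1 hl
    have hinv : h⁻¹ = h := inv_eq_of_mul_eq_one_right hh
    have hh' : ∀ k, h * (h * k) = k := fun k => by rw [← mul_assoc, hh, one_mul]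
    rw [List.prod_cons, commutatorElement_mul_right_eq_mul_conj, ih ht]
    by_cases he : Even t.length
    · simp [he, Nat.even_add_one]
    · simp [he, Nat.even_add_one, commutatorElement_def, hinv, mul_assoc, hh, hh']

theorem commutatorElement_list_prod_eq_one_iff {G : Type*} [Group G] {g z : G} (hz : z ≠ 1)
    {l : List G} (hl : ∀ h ∈ l, h * h = 1 ∧ ⁅g, h⁆ = z) :
    ⁅g, l.prod⁆ = 1 ↔ Even l.length := by
  rw [commutatorElement_list_prod hl]
  split_ifs with he <;> simp [he, hz]

namespace SlimPLS

open SimpleGraph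

variable {P : Type*} {S : SlimPLS P} {a b c p u v w x y y' z : P}

local notation "d" => S.graph.dist

-- When `a` and `b` are not collinear the junk value is `a`.
noncomputable def third (S : SlimPLS P) (a b : P) : P :=
  if h : ∃ c, ∃ l ∈ S.lines, a ∈ l ∧ b ∈ l ∧ c ∈ l ∧ c ≠ a ∧ c ≠ b then h.choose else a

def HasOpposite (S : SlimPLS P) (a : P) : Prop :=
  ∃ b, S.graph.dist a b = 3

theorem exists_line_third (h : S.graph.Adj a b) :
    ∃ l ∈ S.lines, a ∈ l ∧ b ∈ l ∧ S.third a b ∈ l ∧ S.third a b ≠ a ∧ S.third a b ≠ b := by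
  have hex : ∃ c, ∃ l ∈ S.lines, a ∈ l ∧ b ∈ l ∧ c ∈ l ∧ c ≠ a ∧ c ≠ b := by
    obtain ⟨hab, l, hl, ha, hb⟩ := h
    obtain ⟨c, hc⟩ : ((l.erase a).erase b).Nonempty := by
      rw [← Finset.card_pos, Finset.card_erase_of_mem (Finset.mem_erase.2 ⟨hab.symm, hb⟩),
        Finset.card_erase_of_mem ha, S.three_points l hl]
      norm_num
    simp only [Finset.mem_erase] at hc
    exact ⟨c, l, hl, ha, hb, hc.2.2, hc.2.1, hc.1⟩
  rw [third, dif_pos hex]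
  exact hex.choose_spec

theorem eq_insert_third {l : Finset P} (hl : l ∈ S.lines) (ha : a ∈ l) (hb : b ∈ l)
    (hab : a ≠ b) : l = {a, b, S.third a b} := by
  obtain ⟨l', hl', ha', hb', hc', hca, hcb⟩ := exists_line_third (S := S) ⟨hab, l, hl, ha, hb⟩
  obtain rfl := S.unique_line l hl l' hl' a b hab ha hb ha' hb'
  refine (Finset.eq_of_subset_of_card_le ?_ ?_).symm
  · simp [Finset.insert_subset_iff, ha, hb, hc']
  · rw [S.three_points l hl, Finset.card_eq_three.2 ⟨a, b, _, hab, hca.symm, hcb.symm, rfl⟩]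

theorem eq_third {l : Finset P} (hl : l ∈ S.lines) (ha : a ∈ l) (hb : b ∈ l) (hc : c ∈ l)
    (hab : a ≠ b) (hca : c ≠ a) (hcb : c ≠ b) : c = S.third a b := by
  rw [eq_insert_third hl ha hb hab] at hc
  simpa [hca, hcb] using hc

theorem third_comm (h : S.graph.Adj a b) : S.third a b = S.third b a := by
  obtain ⟨l, hl, ha, hb, hc, hca, hcb⟩ := exists_line_third h
  exact eq_third hl hb ha hc h.ne' hcb hca

theorem adj_third_left (h : S.graph.Adj a b) : S.graph.Adj a (S.third a b) := by
  obtain ⟨l, hl, ha, -, hc, hca, -⟩ := exists_line_third h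
  exact ⟨hca.symm, l, hl, ha, hc⟩

theorem adj_third_right (h : S.graph.Adj a b) : S.graph.Adj b (S.third a b) :=
  third_comm h ▸ adj_third_left h.symm

theorem third_third (h : S.graph.Adj a b) : S.third a (S.third a b) = b := by
  obtain ⟨l, hl, ha, hb, hc, hca, hcb⟩ := exists_line_third h
  exact (eq_third hl ha hc hb hca.symm h.ne' hcb.symm).symm

theorem IsDense.exists_adj_adj (hD : S.IsDense) (h : d x y = 2) :
    ∃ u v, u ≠ v ∧ S.graph.Adj x u ∧ S.graph.Adj u y ∧ S.graph.Adj x v ∧ S.graph.Adj v y :=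
  hD x y h

namespace IsNearHexagon

theorem dist_le_three (hNH : S.IsNearHexagon) (a b : P) : d a b ≤ 3 := hNH.2.1 a b

theorem eq_of_dist_eq_zero (hNH : S.IsNearHexagon) (h : d a b = 0) : a = b :=
  hNH.1.dist_eq_zero_iff.1 h

theorem exists_nearest (hNH : S.IsNearHexagon) {l : Finset P} (hl : l ∈ S.lines) (z : P) :
    ∃ y ∈ l, ∀ w ∈ l, w ≠ y → d z w = d z y + 1 := by
  obtain ⟨y, ⟨hy, hmin⟩, huniq⟩ := hNH.2.2.2.2 z l hl
  refine ⟨y, hy, fun w hw hwy => ?_⟩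
  have hle : d z w ≤ d z y + 1 := by
    calc d z w ≤ d z y + d y w := hNH.1.dist_triangle
      _ = d z y + 1 := by
        rw [dist_eq_one_iff_adj.2 (show S.graph.Adj y w from ⟨hwy.symm, l, hl, hy, hw⟩)]
  have hlt : d z y < d z w :=
    lt_of_not_ge fun hwy' => hwy (huniq w ⟨hw, fun u hu => hwy'.trans (hmin u hu)⟩)
  omega

theorem dist_cases (hNH : S.IsNearHexagon) (hab : S.graph.Adj a b) (z : P) :
    (d z b = d z a + 1 ∧ d z (S.third a b) = d z a + 1) ∨
      (d z a = d z b + 1 ∧ d z (S.third a b) = d z b + 1) ∨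
      (d z a = d z (S.third a b) + 1 ∧ d z b = d z (S.third a b) + 1) := by
  obtain ⟨l, hl, ha, hb, hc, hca, hcb⟩ := exists_line_third hab
  obtain ⟨y, hy, hnear⟩ := hNH.exists_nearest hl z
  rw [eq_insert_third hl ha hb hab.ne] at hy
  simp only [Finset.mem_insert, Finset.mem_singleton] at hy
  rcases hy with rfl | rfl | rfl
  · exact Or.inl ⟨hnear b hb hab.ne', hnear _ hc hca⟩
  · exact Or.inr (Or.inl ⟨hnear a ha hab.ne, hnear _ hc hcb⟩)
  · exact Or.inr (Or.inr ⟨hnear a ha hca.symm, hnear b hb hcb.symm⟩)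

theorem dist_le_dist_add_one (hNH : S.IsNearHexagon) (hab : S.graph.Adj a b) (z : P) :
    d z a ≤ d z b + 1 := by
  rcases hNH.dist_cases hab z with h | h | h <;> omega

theorem dist_third_of_eq (hNH : S.IsNearHexagon) (hab : S.graph.Adj a b) (h : d z a = d z b) :
    d z a = d z (S.third a b) + 1 := by
  rcases hNH.dist_cases hab z with h' | h' | h' <;> omega

theorem dist_third_of_eq_add_one (hNH : S.IsNearHexagon) (hab : S.graph.Adj a b)
    (h : d z b = d z a + 1) : d z (S.third a b) = d z a + 1 := by
  rcases hNH.dist_cases hab z with h' | h' | h' <;> omega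

theorem dist_third_of_eq_add_one' (hNH : S.IsNearHexagon) (hab : S.graph.Adj a b)
    (h : d z a = d z b + 1) : d z (S.third a b) = d z b + 1 := by
  rcases hNH.dist_cases hab z with h' | h' | h' <;> omega

theorem eq_third_of_adj (hNH : S.IsNearHexagon) (hab : S.graph.Adj a b) (ha : S.graph.Adj z a)
    (hb : S.graph.Adj z b) : z = S.third a b := by
  have := hNH.dist_third_of_eq hab (z := z)
  rw [dist_eq_one_iff_adj.2 ha, dist_eq_one_iff_adj.2 hb] at this
  exact hNH.eq_of_dist_eq_zero (by omega)

theorem dist_eq_three_or_dist_third_eq_three (hNH : S.IsNearHexagon) (hab : S.graph.Adj a b)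
    (h : d z a = 3) : d z b = 3 ∨ d z (S.third a b) = 3 := by
  have := hNH.dist_le_three z b
  have := hNH.dist_le_three z (S.third a b)
  rcases hNH.dist_cases hab z with h' | h' | h' <;> omega

theorem dist_eq_three_or_two (hNH : S.IsNearHexagon) (hab : S.graph.Adj a b) (h : d z a = 3) :
    d z b = 3 ∨ d z b = 2 := by
  have := hNH.dist_le_dist_add_one hab z
  have := hNH.dist_le_three z b
  omega

theorem dist_third_eq_two_left (hNH : S.IsNearHexagon) (hab : S.graph.Adj a b)
    (ha : S.graph.Adj z a) (hb : d z b = 2) : d z (S.third a b) = 2 := by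
  rw [← dist_eq_one_iff_adj] at ha
  exact hNH.dist_third_of_eq_add_one hab (by omega) |>.trans (by omega)

theorem dist_third_eq_two_right (hNH : S.IsNearHexagon) (hab : S.graph.Adj a b)
    (ha : d z a = 2) (hb : S.graph.Adj z b) : d z (S.third a b) = 2 := by
  rw [← dist_eq_one_iff_adj] at hb
  exact hNH.dist_third_of_eq_add_one' hab (by omega) |>.trans (by omega)

theorem adj_third_of_dist_eq_two (hNH : S.IsNearHexagon) (hab : S.graph.Adj a b)
    (ha : d z a = 2) (hb : d z b = 2) : S.graph.Adj z (S.third a b) := by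
  have := hNH.dist_third_of_eq hab (ha.trans hb.symm)
  exact dist_eq_one_iff_adj.1 (by omega)

theorem dist_eq_two_of_adj_of_adj (hNH : S.IsNearHexagon) (hxy : d x y = 2)
    (hxu : S.graph.Adj x u) (huy : S.graph.Adj u y) (hxv : S.graph.Adj x v)
    (hvy : S.graph.Adj v y) (huv : u ≠ v) : d u v = 2 := by
  have hle := hNH.dist_le_dist_add_one hxv.symm u
  rw [dist_eq_one_iff_adj.2 hxu.symm] at hle
  have h0 : d u v ≠ 0 := fun h => huv (hNH.eq_of_dist_eq_zero h)
  have h1 : d u v ≠ 1 := fun h => by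
    have huv' := dist_eq_one_iff_adj.1 h
    rw [(hNH.eq_third_of_adj huv' hxu hxv).trans
      (hNH.eq_third_of_adj huv' huy.symm hvy.symm).symm, dist_self] at hxy
    omega
  omega

theorem adj_third_third (hNH : S.IsNearHexagon) (hxy : d x y = 2)
    (hxu : S.graph.Adj x u) (huy : S.graph.Adj u y) (hxv : S.graph.Adj x v)
    (hvy : S.graph.Adj v y) (huv : u ≠ v) : S.graph.Adj (S.third x u) (S.third v y) := by
  have huv2 := hNH.dist_eq_two_of_adj_of_adj hxy hxu huy hxv hvy huv
  have hvp := hNH.dist_third_eq_two_left hxu hxv.symm (dist_comm.trans huv2)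
  have hyp := hNH.dist_third_eq_two_right hxu (dist_comm.trans hxy) huy.symm
  exact hNH.adj_third_of_dist_eq_two hvy (dist_comm.trans hvp) (dist_comm.trans hyp)

theorem adj_third_third' (hNH : S.IsNearHexagon) (hxy : d x y = 2)
    (hxu : S.graph.Adj x u) (huy : S.graph.Adj u y) (hxv : S.graph.Adj x v)
    (hvy : S.graph.Adj v y) (huv : u ≠ v) : S.graph.Adj (S.third u y) (S.third x v) := by
  have := hNH.adj_third_third (dist_comm.trans hxy) huy.symm hxu.symm hvy.symm hxv.symm huv
  rwa [third_comm huy.symm, third_comm hxv.symm] at this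

theorem third_third_eq (hNH : S.IsNearHexagon) (hxy : d x y = 2)
    (hxu : S.graph.Adj x u) (huy : S.graph.Adj u y) (hxv : S.graph.Adj x v)
    (hvy : S.graph.Adj v y) (huv : u ≠ v) :
    S.third (S.third x u) (S.third v y) = S.third (S.third u y) (S.third x v) := by
  have huv2 := hNH.dist_eq_two_of_adj_of_adj hxy hxu huy hxv hvy huv
  have hpt := hNH.adj_third_third hxy hxu huy hxv hvy huv
  have hqs := hNH.adj_third_third' hxy hxu huy hxv hvy huv
  have hyp := hNH.dist_third_eq_two_right hxu (dist_comm.trans hxy) huy.symm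
  have hpq := hNH.dist_third_eq_two_left huy (adj_third_right hxu).symm (dist_comm.trans hyp)
  have hvq := hNH.dist_third_eq_two_right huy (dist_comm.trans huv2) hvy
  have hqt := hNH.dist_third_eq_two_right hvy (dist_comm.trans hvq) (adj_third_right huy).symm
  have hus := hNH.dist_third_eq_two_left hxv hxu.symm huv2
  have hsp := hNH.dist_third_eq_two_left hxu (adj_third_left hxv).symm (dist_comm.trans hus)
  have hys := hNH.dist_third_eq_two_right hxv (dist_comm.trans hxy) hvy.symm
  have hst := hNH.dist_third_eq_two_left hvy (adj_third_right hxv).symm (dist_comm.trans hys)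
  exact hNH.eq_third_of_adj hqs
    (hNH.adj_third_of_dist_eq_two hpt (dist_comm.trans hpq) hqt).symm
    (hNH.adj_third_of_dist_eq_two hpt hsp hst).symm

theorem exists_adj_adj_dist_eq_three (hNH : S.IsNearHexagon) (hD : S.IsDense)
    (hxy : d x y = 3) (hxa : d x a = 2) (hya : d y a = 2) :
    ∃ w, S.graph.Adj y w ∧ S.graph.Adj w a ∧ d x w = 3 := by
  obtain ⟨u, v, huv, hyu, hua, hyv, hva⟩ := hD.exists_adj_adj hya
  rcases hNH.dist_eq_three_or_two hyu hxy with hu | hu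
  · exact ⟨u, hyu, hua, hu⟩
  rcases hNH.dist_eq_three_or_two hyv hxy with hv | hv
  · exact ⟨v, hyv, hva, hv⟩
  exfalso
  have hadj := hNH.adj_third_third hya hyv hva hyu hua huv.symm
  have h3 := hNH.dist_third_of_eq_add_one' hyv (z := x) (by omega)
  have h1 := hNH.dist_third_of_eq hua (z := x) (hu.trans hxa.symm)
  have := hNH.dist_le_dist_add_one hadj x
  omega

theorem reflTransGen_of_dist_le_two (hNH : S.IsNearHexagon) (hD : S.IsDense)
    (hy : d x y = 3) (hy' : d x y' = 3) (h : d y y' ≤ 2) :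
    Relation.ReflTransGen (fun a b => S.graph.Adj a b ∧ d x a = 3 ∧ d x b = 3) y y' := by
  rcases (by omega : d y y' = 0 ∨ d y y' = 1 ∨ d y y' = 2) with h0 | h1 | h2
  · rw [hNH.eq_of_dist_eq_zero h0]
  · exact .single ⟨dist_eq_one_iff_adj.1 h1, hy, hy'⟩
  obtain ⟨u, v, huv, hyu, huy', hyv, hvy'⟩ := hD.exists_adj_adj h2
  rcases hNH.dist_eq_three_or_two hyu hy with hu | hu
  · exact .tail (.single ⟨hyu, hy, hu⟩) ⟨huy', hu, hy'⟩
  rcases hNH.dist_eq_three_or_two hyv hy with hv | hv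
  · exact .tail (.single ⟨hyv, hy, hv⟩) ⟨hvy', hv, hy'⟩
  have hp := hNH.dist_third_of_eq_add_one' hyu (z := x) (by omega)
  have ht := hNH.dist_third_of_eq_add_one hvy' (z := x) (by omega)
  rw [hu] at hp
  rw [hv] at ht
  exact .head ⟨adj_third_left hyu, hy, hp⟩ <|
    .head ⟨hNH.adj_third_third h2 hyu huy' hyv hvy' huv, hp, ht⟩ <|
    .single ⟨(adj_third_right hvy').symm, ht, hy'⟩

theorem reflTransGen_of_dist_eq_three (hNH : S.IsNearHexagon) (hD : S.IsDense)
    (hy : d x y = 3) (hy' : d x y' = 3) :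
    Relation.ReflTransGen (fun a b => S.graph.Adj a b ∧ d x a = 3 ∧ d x b = 3) y y' := by
  by_cases hle : d y y' ≤ 2
  · exact hNH.reflTransGen_of_dist_le_two hD hy hy' hle
  obtain ⟨a, hy'a, hay⟩ := hNH.1.exists_adj_dist_eq (u := y') (v := y) (n := 2)
    (by have := hNH.dist_le_three y y'; rw [dist_comm]; omega)
  rcases hNH.dist_eq_three_or_two hy'a hy' with ha | ha
  · exact (hNH.reflTransGen_of_dist_le_two hD hy ha (dist_comm.trans hay).le).tail
      ⟨hy'a.symm, ha, hy'⟩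
  obtain ⟨w, hyw, hwa, hw⟩ := hNH.exists_adj_adj_dist_eq_three hD hy ha (dist_comm.trans hay)
  have hwy' := hNH.dist_le_dist_add_one hy'a w
  rw [dist_eq_one_iff_adj.2 hwa] at hwy'
  exact .head ⟨hyw, hy, hw⟩ (hNH.reflTransGen_of_dist_le_two hD hw hy' hwy')

theorem hasOpposite_third (hNH : S.IsNearHexagon) (ha : S.HasOpposite a)
    (hab : S.graph.Adj a b) (hb : ¬ S.HasOpposite b) : S.HasOpposite (S.third a b) := by
  obtain ⟨g, hg⟩ := ha
  rcases hNH.dist_eq_three_or_dist_third_eq_three hab (dist_comm.trans hg) with h | h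
  · exact absurd ⟨g, dist_comm.trans h⟩ hb
  · exact ⟨g, dist_comm.trans h⟩

theorem reflTransGen_of_hasOpposite (hNH : S.IsNearHexagon) (hD : S.IsDense)
    (hx : S.HasOpposite x) (hy : S.HasOpposite y) :
    Relation.ReflTransGen (fun a b => S.HasOpposite a ∧ (S.graph.Adj a b ∨ d a b = 3)) x y := by
  have := hNH.dist_le_three x y
  rcases (by omega : d x y = 0 ∨ d x y = 1 ∨ d x y = 3 ∨ d x y = 2) with h | h | h | h
  · rw [hNH.eq_of_dist_eq_zero h]
  · exact .single ⟨hx, .inl (dist_eq_one_iff_adj.1 h)⟩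
  · exact .single ⟨hx, .inr h⟩
  obtain ⟨u, v, huv, hxu, huy, hxv, hvy⟩ := hD.exists_adj_adj h
  by_cases hu : S.HasOpposite u
  · exact .head ⟨hx, .inl hxu⟩ (.single ⟨hu, .inl huy⟩)
  by_cases hv : S.HasOpposite v
  · exact .head ⟨hx, .inl hxv⟩ (.single ⟨hv, .inl hvy⟩)
  have hp := hNH.hasOpposite_third hx hxu hu
  have ht : S.HasOpposite (S.third v y) := by
    rw [third_comm hvy]
    exact hNH.hasOpposite_third hy hvy.symm hv
  exact .head ⟨hx, .inl (adj_third_left hxu)⟩ <|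
    .head ⟨hp, .inl (hNH.adj_third_third h hxu huy hxv hvy huv)⟩ <|
    .single ⟨ht, .inl (adj_third_right hvy).symm⟩

end IsNearHexagon

namespace Rep

variable {R : Type*} [Group R] (ρ : S.Rep R)

theorem mul_self (a : P) : ρ.r a * ρ.r a = 1 := by
  rw [← pow_two, ← ρ.order_two a, pow_orderOf_eq_one]

theorem mul_eq_third (h : S.graph.Adj a b) : ρ.r a * ρ.r b = ρ.r (S.third a b) := by
  obtain ⟨l, hl, ha, hb, hc, hca, hcb⟩ := exists_line_third h
  exact ρ.line_rel l hl a ha b hb _ hc h.ne hca.symm hcb.symm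

theorem commute_of_adj (h : S.graph.Adj a b) : Commute (ρ.r a) (ρ.r b) := by
  rw [Commute, SemiconjBy, ρ.mul_eq_third h, ρ.mul_eq_third h.symm, third_comm h]

theorem commute_of_dist_eq_two (hNH : S.IsNearHexagon) (hD : S.IsDense) (h : d x y = 2) :
    Commute (ρ.r x) (ρ.r y) := by
  obtain ⟨u, v, huv, hxu, huy, hxv, hvy⟩ := hD.exists_adj_adj h
  have hpt := hNH.adj_third_third h hxu huy hxv hvy huv
  have hqs := hNH.adj_third_third' h hxu huy hxv hvy huv
  have hsq : (ρ.r x * ρ.r y) * (ρ.r x * ρ.r y) = 1 :=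
    calc (ρ.r x * ρ.r y) * (ρ.r x * ρ.r y)
        = (ρ.r x * ρ.r u) * ((ρ.r u * ρ.r y) * (ρ.r x * ρ.r v)) * (ρ.r v * ρ.r y) := by
          have h : ∀ a g, ρ.r a * (ρ.r a * g) = g := fun a g => by
            rw [← mul_assoc, ρ.mul_self, one_mul]
          simp only [mul_assoc, h]
      _ = ρ.r (S.third x u) * ρ.r (S.third (S.third x u) (S.third v y)) * ρ.r (S.third v y) := by
          rw [ρ.mul_eq_third hxu, ρ.mul_eq_third huy, ρ.mul_eq_third hxv, ρ.mul_eq_third hvy,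
            ρ.mul_eq_third hqs, hNH.third_third_eq h hxu huy hxv hvy huv]
      _ = 1 := by
          rw [ρ.mul_eq_third (adj_third_left hpt), third_third hpt, ρ.mul_self]
  have hinv : ∀ a, (ρ.r a)⁻¹ = ρ.r a := fun a => inv_eq_of_mul_eq_one_right (ρ.mul_self a)
  rw [Commute, SemiconjBy, eq_inv_of_mul_eq_one_left hsq, mul_inv_rev, hinv, hinv]

theorem commute_of_dist_le_two (hNH : S.IsNearHexagon) (hD : S.IsDense) (h : d x y ≤ 2) :
    Commute (ρ.r x) (ρ.r y) := by
  rcases (by omega : d x y = 0 ∨ d x y = 1 ∨ d x y = 2) with h | h | h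
  · rw [hNH.eq_of_dist_eq_zero h]
  · exact ρ.commute_of_adj (dist_eq_one_iff_adj.1 h)
  · exact ρ.commute_of_dist_eq_two hNH hD h

theorem commutatorElement_eq_of_adj (hNH : S.IsNearHexagon) (hD : S.IsDense)
    (hab : S.graph.Adj a b) (ha : d x a = 3) (hb : d x b = 3) :
    ⁅ρ.r x, ρ.r a⁆ = ⁅ρ.r x, ρ.r b⁆ := by
  have hc : Commute (ρ.r x) (ρ.r (S.third a b)) := ρ.commute_of_dist_eq_two hNH hD
    (by have := hNH.dist_third_of_eq hab (ha.trans hb.symm); omega)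
  rw [← third_third hab, ← ρ.mul_eq_third (adj_third_left hab),
    commutatorElement_mul_right_eq_mul_conj, commutatorElement_eq_one_iff_commute.2 hc, mul_one,
    mul_inv_cancel_right]

theorem commutatorElement_eq_of_dist_eq_three (hNH : S.IsNearHexagon) (hD : S.IsDense)
    (hy : d x y = 3) (hy' : d x y' = 3) : ⁅ρ.r x, ρ.r y⁆ = ⁅ρ.r x, ρ.r y'⁆ := by
  have hchain := hNH.reflTransGen_of_dist_eq_three hD hy hy'
  clear hy'
  induction hchain with
  | refl => rfl
  | tail _ hbc ih => exact ih.trans (ρ.commutatorElement_eq_of_adj hNH hD hbc.1 hbc.2.1 hbc.2.2)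

theorem forall_commute_of_commutatorElement_eq_one (hNH : S.IsNearHexagon) (hD : S.IsDense)
    (hxy : d x y = 3) (h : ⁅ρ.r x, ρ.r y⁆ = 1) (q : P) : Commute (ρ.r x) (ρ.r q) := by
  by_cases hq : d x q = 3
  · rw [← commutatorElement_eq_one_iff_commute,
      ρ.commutatorElement_eq_of_dist_eq_three hNH hD hq hxy, h]
  · exact ρ.commute_of_dist_le_two hNH hD (by have := hNH.dist_le_three x q; omega)

theorem forall_commute_of_dist_eq_three (hNH : S.IsNearHexagon) (hD : S.IsDense)
    (hp : ∀ q, Commute (ρ.r p) (ρ.r q)) (hpw : d p w = 3) (q : P) :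
    Commute (ρ.r w) (ρ.r q) :=
  ρ.forall_commute_of_commutatorElement_eq_one hNH hD (dist_comm.trans hpw)
    (commutatorElement_eq_one_iff_commute.2 (hp w).symm) q

theorem forall_commute_of_adj (hNH : S.IsNearHexagon) (hD : S.IsDense)
    (hp : ∀ q, Commute (ρ.r p) (ρ.r q)) (hop : S.HasOpposite p) (hpw : S.graph.Adj p w)
    (q : P) : Commute (ρ.r w) (ρ.r q) := by
  obtain ⟨y, hy⟩ := hop
  have hy' := ρ.forall_commute_of_dist_eq_three hNH hD hp hy
  rcases hNH.dist_eq_three_or_dist_third_eq_three hpw (dist_comm.trans hy) with h | h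
  · exact ρ.forall_commute_of_dist_eq_three hNH hD hy' h q
  · rw [← third_third hpw, ← ρ.mul_eq_third (adj_third_left hpw)]
    exact (hp q).mul_left (ρ.forall_commute_of_dist_eq_three hNH hD hy' h q)

theorem forall_commute_of_reflTransGen (hNH : S.IsNearHexagon) (hD : S.IsDense)
    (hx : ∀ q, Commute (ρ.r x) (ρ.r q))
    (h : Relation.ReflTransGen (fun a b => S.HasOpposite a ∧ (S.graph.Adj a b ∨ d a b = 3)) x p) :
    ∀ q, Commute (ρ.r p) (ρ.r q) := by
  induction h with
  | refl => exact hx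
  | tail _ hbc ih =>
    obtain ⟨hb, hbc | hbc⟩ := hbc
    · exact ρ.forall_commute_of_adj hNH hD ih hb hbc
    · exact ρ.forall_commute_of_dist_eq_three hNH hD ih hbc

theorem commute_of_forall_commute (h : ∀ p q, Commute (ρ.r p) (ρ.r q)) (a b : R) :
    Commute a b := by
  have hc := Subgroup.closure_le_centralizer_centralizer (Set.range ρ.r)
  rw [ρ.gen] at hc
  exact Set.centralizer_centralizer_comm_of_comm (by rintro _ ⟨p, rfl⟩ _ ⟨q, rfl⟩; exact h p q)
    a (hc trivial) b (hc trivial)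

theorem commutatorElement_ne_one (hNH : S.IsNearHexagon) (hD : S.IsDense)
    (hna : ¬ ∀ a b : R, a * b = b * a) (hxy : d x y = 3) : ⁅ρ.r x, ρ.r y⁆ ≠ 1 := by
  intro h
  have hx := ρ.forall_commute_of_commutatorElement_eq_one hNH hD hxy h
  refine hna (ρ.commute_of_forall_commute fun p => ?_)
  by_cases hp : S.HasOpposite p
  · exact ρ.forall_commute_of_reflTransGen hNH hD hx
      (hNH.reflTransGen_of_hasOpposite hD ⟨y, hxy⟩ hp)
  · refine fun q => ρ.commute_of_dist_le_two hNH hD ?_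
    have := hNH.dist_le_three p q
    have : d p q ≠ 3 := fun h => hp ⟨q, h⟩
    omega

end Rep

end SlimPLS

/-- Let `(R,ψ)` be a non-abelian representation of a slim dense
near hexagon, `x` a point and `Y` a finite subset of `Γ₃(x)`. For any
enumeration `y₁, …, y_k` of `Y`, the commutator `[r_x, r_{y₁} ⋯ r_{y_k}]`
equals `1` iff `|Y|` is even. -/
theorem commutator_with_product_over_distance_three {P : Type*} (S : SlimPLS P)
    (hNH : S.IsNearHexagon) (hD : S.IsDense)
    {R : Type*} [Group R] (ρ : S.Rep R)
    (hna : ¬ ∀ a b : R, a * b = b * a)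
    (x : P) (Y : Finset P) (hY : ∀ y ∈ Y, S.graph.dist x y = 3)
    (ys : List P) (hnd : ys.Nodup) (hys : ys.toFinset = Y) :
    ⁅ρ.r x, (ys.map ρ.r).prod⁆ = 1 ↔ Even Y.card := by
  subst hys
  rw [List.toFinset_card_of_nodup hnd, ← List.length_map ρ.r]
  have hopp : ∀ y ∈ ys, S.graph.dist x y = 3 := fun y hy => hY y (List.mem_toFinset.2 hy)
  rcases ys with _ | ⟨y₀, ys⟩
  · simp
  refine commutatorElement_list_prod_eq_one_iff
    (ρ.commutatorElement_ne_one hNH hD hna (hopp y₀ List.mem_cons_self)) ?_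
  simp only [List.forall_mem_map]
  exact fun y hy => ⟨ρ.mul_self y,
    ρ.commutatorElement_eq_of_dist_eq_three hNH hD (hopp y hy) (hopp y₀ List.mem_cons_self)⟩
end
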